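/- arXiv:2305.18642 — 7 statements merged into one kernel-verified Lean document; each statement's English description precedes it below -/
import Mathlib

section
/- Let N ∈ ℕ, m ∈ ℕ with m ≤ N, let 1 ≤ p, q ≤ ∞, let w = (w_i)_{i=1}^N be a vector of positive weights, and let p*, q* be the Hölder conjugates of p and q (1/p + 1/p* = 1 and 1/q + 1/q* = 1). Then the Kolmogorov m-width of the unweighted unit ball B^p_N in the weighted space ℓ^q_N(w) equals the Gelfand m-width of the weighted ball B^{q*}_N(1/w) in the unweighted space ℓ^{p*}_N, i.e. d_m(B^p_N, ℓ^q_N(w)) = d^m(B^{q*}_N(1/w), ℓ^{p*}_N), where 1/w = (1/w_i)_{i=1}^N. -/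
open Finset
open scoped ENNReal

noncomputable section

/-- The weighted `ℓ^p` (quasi-)norm on `ℝ^N` with positive weights `w` and exponent
`p ∈ (0,∞]`: `‖x‖_{p,w} = (∑ i, (|x i| / w i)^p)^(1/p)` for `p < ∞`, and
`sup_i |x i| / w i` for `p = ∞`. -/
def wnorm {N : ℕ} (p : ℝ≥0∞) (w : Fin N → ℝ) (x : Fin N → ℝ) : ℝ :=
  if p = ⊤ then ⨆ i, |x i| / w i
  else (∑ i, (|x i| / w i) ^ p.toReal) ^ (1 / p.toReal)

/-- The weighted `ℓ^p` unit ball `B^p_N(w)` in `ℝ^N`. -/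
def wball {N : ℕ} (p : ℝ≥0∞) (w : Fin N → ℝ) : Set (Fin N → ℝ) :=
  {x | wnorm p w x ≤ 1}

/-- The Kolmogorov `m`-width of a subset `K` of `ℝ^N` equipped with the norm `nrm`. -/
def kolWidth {N : ℕ} (m : ℕ) (K : Set (Fin N → ℝ)) (nrm : (Fin N → ℝ) → ℝ) : ℝ :=
  sInf { r | ∃ X : Submodule ℝ (Fin N → ℝ), Module.finrank ℝ X ≤ m ∧
    r = ⨆ x : K, ⨅ z : X, nrm ((x : Fin N → ℝ) - (z : Fin N → ℝ)) }

/-- The Gelfand `m`-width of a subset `K` of `ℝ^N` equipped with the norm `nrm`: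
the infimum over linear maps `A : ℝ^N → ℝ^m` of `sup { nrm x : x ∈ K ∩ ker A }`
(equivalently, the infimum over subspaces of codimension at most `m`). -/
def gelWidth {N : ℕ} (m : ℕ) (K : Set (Fin N → ℝ)) (nrm : (Fin N → ℝ) → ℝ) : ℝ :=
  sInf { r | ∃ A : (Fin N → ℝ) →ₗ[ℝ] (Fin m → ℝ),
    r = ⨆ x : (K ∩ (LinearMap.ker A : Set (Fin N → ℝ)) : Set (Fin N → ℝ)),
          nrm (x : Fin N → ℝ) }

/-!
For a subspace `X`, Hahn–Banach (in the quotient by `X`) expresses the `ℓ^q_N(w)`-distance from `x`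
to `X` as the largest pairing `x ⬝ᵥ y` over the vectors `y` of the dual ball `B^{q*}_N(1/w)` that
annihilate `X`. Taking the supremum over `x ∈ B^p_N` and exchanging the two suprema, Hölder duality
`‖y‖_{p*} = sup_{x ∈ B^p_N} x ⬝ᵥ y` turns the deviation of `B^p_N` from `X` into the supremum of
`‖y‖_{p*}` over `B^{q*}_N(1/w) ∩ X^⊥`. Finally, the annihilators of subspaces of dimension at most
`m` are exactly the kernels of linear maps `ℝ^N → ℝ^m` (the rows of the map span the subspace), so
both widths are infima of the same set of numbers.
-/

open WithLp

lemma abs_sign_le_one {α : Type*} [Ring α] [LinearOrder α] [IsOrderedRing α] (a : α) :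
    |(SignType.sign a : α)| ≤ 1 := by
  cases SignType.sign a <;> simp

section Holder

variable {ι : Type*} [Fintype ι]

lemma norm_toLp_eq_sum {r : ℝ≥0∞} (hr0 : r ≠ 0) (hr : r ≠ ⊤) (x : ι → ℝ) :
    ‖toLp r x‖ = (∑ i, |x i| ^ r.toReal) ^ (1 / r.toReal) := by
  simp [PiLp.norm_eq_sum (ENNReal.toReal_pos hr0 hr)]

lemma dotProduct_le_norm_toLp_one_mul_norm_toLp_top (x y : ι → ℝ) :
    x ⬝ᵥ y ≤ ‖toLp 1 x‖ * ‖toLp ⊤ y‖ := by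
  calc x ⬝ᵥ y ≤ ∑ i, |x i| * ‖toLp ⊤ y‖ := sum_le_sum fun i _ => by
        grw [← PiLp.norm_apply_le (toLp ⊤ y) i]
        simpa [abs_mul] using le_abs_self (x i * y i)
    _ = ‖toLp 1 x‖ * ‖toLp ⊤ y‖ := by simp [← sum_mul, PiLp.norm_eq_of_L1]

theorem dotProduct_le_norm_toLp_mul_norm_toLp {r s : ℝ≥0∞} [r.HolderConjugate s]
    (x y : ι → ℝ) : x ⬝ᵥ y ≤ ‖toLp r x‖ * ‖toLp s y‖ := by
  rcases eq_or_ne s ⊤ with rfl | hs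
  · obtain rfl := (ENNReal.HolderConjugate.eq_top_iff_eq_one ⊤ r).1 rfl
    exact dotProduct_le_norm_toLp_one_mul_norm_toLp_top x y
  rcases eq_or_ne r ⊤ with rfl | hr
  · obtain rfl := (ENNReal.HolderConjugate.eq_top_iff_eq_one ⊤ s).1 rfl
    rw [dotProduct_comm, mul_comm]
    exact dotProduct_le_norm_toLp_one_mul_norm_toLp_top y x
  rw [norm_toLp_eq_sum (ENNReal.HolderConjugate.ne_zero r s) hr,
    norm_toLp_eq_sum (ENNReal.HolderConjugate.ne_zero s r) hs]
  exact Real.inner_le_Lp_mul_Lq univ x y (ENNReal.HolderConjugate.toReal_of_ne_top hr hs)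

lemma exists_norm_toLp_one_le_one_dotProduct_eq (y : ι → ℝ) :
    ∃ x : ι → ℝ, ‖toLp 1 x‖ ≤ 1 ∧ x ⬝ᵥ y = ‖toLp ⊤ y‖ := by
  classical
  cases isEmpty_or_nonempty ι
  · exact ⟨0, by simp, by simp [Subsingleton.elim y 0]⟩
  obtain ⟨i, hi⟩ := exists_eq_ciSup_of_finite (f := fun i => ‖y i‖)
  refine ⟨Pi.single i (SignType.sign (y i) : ℝ), ?_, ?_⟩
  · simpa [PiLp.norm_eq_of_L1, Pi.single_apply] using abs_sign_le_one (y i)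
  · rw [PiLp.norm_eq_ciSup, ← hi]
    simp [single_dotProduct, sign_mul_self]

lemma exists_norm_toLp_top_le_one_dotProduct_eq (y : ι → ℝ) :
    ∃ x : ι → ℝ, ‖toLp ⊤ x‖ ≤ 1 ∧ x ⬝ᵥ y = ‖toLp 1 y‖ := by
  refine ⟨fun i => SignType.sign (y i), ?_, ?_⟩
  · rw [PiLp.norm_eq_ciSup]
    exact Real.iSup_le (fun i => abs_sign_le_one (y i)) zero_le_one
  · simp [PiLp.norm_eq_of_L1, dotProduct, sign_mul_self]

lemma exists_norm_toLp_le_one_dotProduct_eq_of_ne_top {r s : ℝ≥0∞} [r.HolderConjugate s]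
    (hr : r ≠ ⊤) (hs : s ≠ ⊤) (y : ι → ℝ) :
    ∃ x : ι → ℝ, ‖toLp r x‖ ≤ 1 ∧ x ⬝ᵥ y = ‖toLp s y‖ := by
  have hrs := ENNReal.HolderConjugate.toReal_of_ne_top hr hs
  have : Fact (1 ≤ r) := ⟨ENNReal.HolderConjugate.one_le r s⟩
  have : Fact (1 ≤ s) := ⟨ENNReal.HolderConjugate.one_le s r⟩
  rcases (norm_nonneg (toLp s y)).eq_or_lt with hM | hM
  · exact ⟨0, by simp, by simp [← hM]⟩
  have hMs : ‖toLp s y‖ ^ s.toReal = ∑ i, |y i| ^ s.toReal := by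
    rw [norm_toLp_eq_sum (ENNReal.HolderConjugate.ne_zero s r) hs,
      ← Real.rpow_mul (sum_nonneg fun i _ => by positivity), one_div_mul_cancel hrs.symm.ne_zero,
      Real.rpow_one]
  generalize ‖toLp s y‖ = M at hM hMs ⊢
  have hsum : ∑ i, (|y i| / M) ^ s.toReal = 1 := by
    simp_rw [Real.div_rpow (abs_nonneg _) hM.le]
    rw [← sum_div, ← hMs, div_self (Real.rpow_pos_of_pos hM _).ne']
  refine ⟨fun i => SignType.sign (y i) * (|y i| / M) ^ (s.toReal - 1), ?_, ?_⟩
  · rw [norm_toLp_eq_sum (ENNReal.HolderConjugate.ne_zero r s) hr]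
    refine Real.rpow_le_one (sum_nonneg fun i _ => by positivity) ?_ (by positivity)
    refine (sum_le_sum fun i _ => ?_).trans hsum.le
    rw [abs_mul, abs_of_nonneg (a := (|y i| / M) ^ _) (by positivity)]
    calc _ ≤ ((|y i| / M) ^ (s.toReal - 1)) ^ r.toReal :=
          Real.rpow_le_rpow (by positivity)
            (mul_le_of_le_one_left (by positivity) (abs_sign_le_one _)) hrs.nonneg
      _ = _ := by rw [← Real.rpow_mul (by positivity), hrs.symm.sub_one_mul_conj]
  · calc _ = ∑ i, M * (|y i| / M) ^ s.toReal := sum_congr rfl fun i _ => ?_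
      _ = M := by rw [← mul_sum, hsum, mul_one]
    rw [← sub_add_cancel s.toReal 1,
      Real.rpow_add_one' (by positivity) (by simp [hrs.symm.ne_zero]), sub_add_cancel,
      mul_right_comm, sign_mul_self]
    field_simp

theorem exists_norm_toLp_le_one_dotProduct_eq {r s : ℝ≥0∞} [r.HolderConjugate s] (y : ι → ℝ) :
    ∃ x : ι → ℝ, ‖toLp r x‖ ≤ 1 ∧ x ⬝ᵥ y = ‖toLp s y‖ := by
  rcases eq_or_ne s ⊤ with rfl | hs
  · obtain rfl := (ENNReal.HolderConjugate.eq_top_iff_eq_one ⊤ r).1 rfl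
    exact exists_norm_toLp_one_le_one_dotProduct_eq y
  rcases eq_or_ne r ⊤ with rfl | hr
  · obtain rfl := (ENNReal.HolderConjugate.eq_top_iff_eq_one ⊤ s).1 rfl
    exact exists_norm_toLp_top_le_one_dotProduct_eq y
  exact exists_norm_toLp_le_one_dotProduct_eq_of_ne_top hr hs y

end Holder

theorem exists_dual_vector_iInf_norm_sub_le {V E : Type*} [AddCommGroup V] [Module ℝ V]
    [SeminormedAddCommGroup E] [NormedSpace ℝ E] (T : V →ₗ[ℝ] E) (X : Submodule ℝ V) (x : V) :
    ∃ f : V →ₗ[ℝ] ℝ, (∀ v, f v ≤ ‖T v‖) ∧ (∀ z ∈ X, f z = 0) ∧ ⨅ z : X, ‖T (x - z)‖ ≤ f x := by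
  set Y := X.map T
  obtain ⟨g, hg, hgx⟩ := exists_dual_vector'' ℝ (Submodule.Quotient.mk (T x) : E ⧸ Y)
  refine ⟨(g : E ⧸ Y →ₗ[ℝ] ℝ) ∘ₗ Y.mkQ ∘ₗ T, fun v => ?_, fun z hz => ?_, ?_⟩
  · calc g (Submodule.Quotient.mk (T v)) ≤ ‖g‖ * ‖(Submodule.Quotient.mk (T v) : E ⧸ Y)‖ :=
          (le_abs_self _).trans (g.le_opNorm _)
      _ ≤ 1 * ‖T v‖ :=
          mul_le_mul hg (Submodule.Quotient.norm_mk_le _ _) (norm_nonneg _) zero_le_one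
      _ = ‖T v‖ := one_mul _
  · simp [(Submodule.Quotient.mk_eq_zero _).2 (Submodule.mem_map_of_mem hz)]
  · change _ ≤ g (Submodule.Quotient.mk (T x))
    rw [hgx]
    refine QuotientAddGroup.le_norm_iff.2 fun e he => ?_
    obtain ⟨z, hz, hTz⟩ : T x - e ∈ Y := (Submodule.Quotient.eq Y).1 he.symm
    calc ⨅ z : X, ‖T (x - z)‖ ≤ ‖T (x - z)‖ :=
          ciInf_le ⟨0, Set.forall_mem_range.2 fun _ => norm_nonneg _⟩ (⟨z, hz⟩ : X)
      _ = ‖e‖ := by rw [map_sub, hTz, sub_sub_cancel]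

theorem Matrix.coe_ker_toLin'_of {R m n : Type*} [CommRing R] [Fintype n] [DecidableEq n]
    (z : m → n → R) :
    (LinearMap.ker (Matrix.of z).toLin' : Set (n → R)) =
      {y | ∀ x ∈ Submodule.span R (Set.range z), x ⬝ᵥ y = 0} := by
  ext y
  calc (Matrix.of z).mulVec y = 0 ↔ ∀ j, z j ⬝ᵥ y = 0 := funext_iff
    _ ↔ Set.range z ⊆ LinearMap.ker ((dotProductBilin R R).flip y) := by
      simp [Set.range_subset_iff]
    _ ↔ _ := Submodule.span_le.symm

theorem Submodule.exists_span_range_eq_of_finrank_le {K V : Type*} [DivisionRing K]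
    [AddCommGroup V] [Module K V] {m : ℕ} (X : Submodule K V) [FiniteDimensional K X]
    (hX : Module.finrank K X ≤ m) : ∃ z : Fin m → V, span K (Set.range z) = X := by
  classical
  set b := Module.finBasis K X
  have hb : span K (Set.range (X.subtype ∘ b)) = X := by
    rw [Set.range_comp, ← map_span, b.span_eq, map_top, range_subtype]
  refine ⟨fun j => if h : (j : ℕ) < Module.finrank K X then X.subtype (b ⟨j, h⟩) else 0,
    Eq.trans (le_antisymm (span_le.2 ?_) (span_mono ?_)) hb⟩
  · rintro _ ⟨j, rfl⟩
    dsimp only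
    split
    · exact subset_span ⟨_, rfl⟩
    · exact zero_mem _
  · rintro _ ⟨i, rfl⟩
    exact ⟨⟨i, i.2.trans_le hX⟩, by simp⟩

variable {N : ℕ}

lemma wnorm_nonneg (r : ℝ≥0∞) {v : Fin N → ℝ} (hv : ∀ i, 0 ≤ v i) (x : Fin N → ℝ) :
    0 ≤ wnorm r v x := by
  have hterm : ∀ i, 0 ≤ |x i| / v i := fun i => div_nonneg (abs_nonneg _) (hv i)
  unfold wnorm
  split
  · exact Real.iSup_nonneg hterm
  · exact Real.rpow_nonneg (sum_nonneg fun i _ => Real.rpow_nonneg (hterm i) _) _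

def weightEquiv (r : ℝ≥0∞) (v : Fin N → ℝ) (hv : ∀ i, v i ≠ 0) :
    (Fin N → ℝ) ≃ₗ[ℝ] PiLp r (fun _ : Fin N => ℝ) :=
  (LinearEquiv.piCongrRight fun i =>
    LinearEquiv.smulOfNeZero ℝ ℝ (v i)⁻¹ (inv_ne_zero (hv i))).trans
      (WithLp.linearEquiv r ℝ (Fin N → ℝ)).symm

lemma weightEquiv_apply (r : ℝ≥0∞) (v : Fin N → ℝ) (hv : ∀ i, v i ≠ 0) (x : Fin N → ℝ) :
    weightEquiv r v hv x = toLp r (fun i => x i / v i) := by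
  ext i
  simp [weightEquiv, div_eq_inv_mul]

lemma norm_weightEquiv (r : ℝ≥0∞) [Fact (1 ≤ r)] {v : Fin N → ℝ} (hv : ∀ i, 0 < v i)
    (x : Fin N → ℝ) : ‖weightEquiv r v (fun i => (hv i).ne') x‖ = wnorm r v x := by
  have hcoord : ∀ i, ‖(weightEquiv r v (fun i => (hv i).ne') x) i‖ = |x i| / v i := fun i => by
    simp [weightEquiv_apply, abs_of_pos (hv i)]
  rcases eq_or_ne r ⊤ with rfl | hr
  · simp [PiLp.norm_eq_ciSup, hcoord, wnorm]
  · simp [PiLp.norm_eq_sum (ENNReal.toReal_pos (zero_lt_one.trans_le Fact.out).ne' hr), hcoord,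
      wnorm, hr]

theorem exists_forall_mem_wball_wnorm_le {r s : ℝ≥0∞} [Fact (1 ≤ r)] [Fact (1 ≤ s)]
    {u v : Fin N → ℝ} (hu : ∀ i, 0 < u i) (hv : ∀ i, 0 < v i) :
    ∃ C, ∀ x ∈ wball r u, wnorm s v x ≤ C := by
  set eu := weightEquiv r u fun i => (hu i).ne'
  set ev := weightEquiv s v fun i => (hv i).ne'
  let T := LinearMap.toContinuousLinearMap (ev.toLinearMap ∘ₗ eu.symm.toLinearMap)
  refine ⟨‖T‖, fun x hx => ?_⟩
  calc wnorm s v x = ‖T (eu x)‖ := by simp [T, ev, ← norm_weightEquiv s hv]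
    _ ≤ ‖T‖ * ‖eu x‖ := T.le_opNorm _
    _ ≤ ‖T‖ := by
      rw [norm_weightEquiv r hu]
      exact mul_le_of_le_one_right (norm_nonneg _) hx

section Weighted

variable {r s : ℝ≥0∞} [r.HolderConjugate s] {v : Fin N → ℝ}

theorem dotProduct_le_wnorm_mul_wnorm (hv : ∀ i, 0 < v i) (x y : Fin N → ℝ) :
    x ⬝ᵥ y ≤ wnorm r v x * wnorm s (fun i => (v i)⁻¹) y := by
  have : Fact (1 ≤ r) := ⟨ENNReal.HolderConjugate.one_le r s⟩
  have : Fact (1 ≤ s) := ⟨ENNReal.HolderConjugate.one_le s r⟩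
  rw [← norm_weightEquiv r hv, ← norm_weightEquiv s (fun i => inv_pos.2 (hv i)),
    weightEquiv_apply, weightEquiv_apply]
  convert dotProduct_le_norm_toLp_mul_norm_toLp (r := r) (s := s)
    (fun i => x i / v i) (fun i => y i / (v i)⁻¹) using 1
  exact sum_congr rfl fun i _ => by field_simp [(hv i).ne']

theorem exists_wnorm_le_one_dotProduct_eq (hv : ∀ i, 0 < v i) (y : Fin N → ℝ) :
    ∃ x, wnorm r v x ≤ 1 ∧ x ⬝ᵥ y = wnorm s (fun i => (v i)⁻¹) y := by
  have : Fact (1 ≤ r) := ⟨ENNReal.HolderConjugate.one_le r s⟩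
  have : Fact (1 ≤ s) := ⟨ENNReal.HolderConjugate.one_le s r⟩
  obtain ⟨a, ha, hay⟩ := exists_norm_toLp_le_one_dotProduct_eq (r := r) (s := s) (y * v)
  refine ⟨a * v, ?_, ?_⟩
  · rw [← norm_weightEquiv r hv, weightEquiv_apply]
    simpa [(hv _).ne'] using ha
  · rw [← norm_weightEquiv s (fun i => inv_pos.2 (hv i)), weightEquiv_apply]
    simp only [div_inv_eq_mul]
    change _ = ‖toLp s (y * v)‖
    rw [← hay]
    exact sum_congr rfl fun i _ => by simp only [Pi.mul_apply]; ring

end Weighted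

theorem exists_mem_wball_inv_iInf_wnorm_sub_le {q qSt : ℝ≥0∞} [q.HolderConjugate qSt]
    {w : Fin N → ℝ} (hw : ∀ i, 0 < w i) (X : Submodule ℝ (Fin N → ℝ)) (x : Fin N → ℝ) :
    ∃ y ∈ wball qSt (fun i => (w i)⁻¹), (∀ z ∈ X, z ⬝ᵥ y = 0) ∧
      ⨅ z : X, wnorm q w (x - z) ≤ x ⬝ᵥ y := by
  have : Fact (1 ≤ q) := ⟨ENNReal.HolderConjugate.one_le q qSt⟩
  obtain ⟨f, hf, hfX, hfx⟩ := exists_dual_vector_iInf_norm_sub_le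
    (weightEquiv q w fun i => (hw i).ne').toLinearMap X x
  simp only [LinearEquiv.coe_coe, norm_weightEquiv q hw] at hf hfx
  set y := (dotProductEquiv ℝ (Fin N)).symm f
  have hfy : ∀ v, f v = v ⬝ᵥ y := fun v => by
    rw [dotProduct_comm, ← dotProductEquiv_apply_apply, LinearEquiv.apply_symm_apply]
  refine ⟨y, ?_, fun z hz => hfy z ▸ hfX z hz, hfy x ▸ hfx⟩
  obtain ⟨x', hx', hx'y⟩ := exists_wnorm_le_one_dotProduct_eq (r := q) (s := qSt) hw y
  change wnorm qSt _ y ≤ 1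
  rw [← hx'y, ← hfy]
  exact (hf x').trans hx'

section Duality

variable {p q pSt qSt : ℝ≥0∞} [p.HolderConjugate pSt] [q.HolderConjugate qSt]
  {w : Fin N → ℝ} (X : Submodule ℝ (Fin N → ℝ))

theorem iSup_iInf_wnorm_sub_le_iSup_wnorm (hw : ∀ i, 0 < w i) :
    (⨆ x : (wball p (fun _ => 1) : Set (Fin N → ℝ)), ⨅ z : X, wnorm q w (x - (z : Fin N → ℝ))) ≤
      ⨆ y : (wball qSt (fun i => (w i)⁻¹) ∩ {y | ∀ z ∈ X, z ⬝ᵥ y = 0} : Set (Fin N → ℝ)),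
        wnorm pSt (fun _ => 1) (y : Fin N → ℝ) := by
  have : Fact (1 ≤ pSt) := ⟨ENNReal.HolderConjugate.one_le pSt p⟩
  have : Fact (1 ≤ qSt) := ⟨ENNReal.HolderConjugate.one_le qSt q⟩
  obtain ⟨C, hC⟩ := exists_forall_mem_wball_wnorm_le (r := qSt) (s := pSt)
    (fun i => inv_pos.2 (hw i)) (fun _ => one_pos)
  refine Real.iSup_le (fun ⟨x, hx⟩ => ?_)
    (Real.iSup_nonneg fun _ => wnorm_nonneg _ (fun _ => zero_le_one) _)
  obtain ⟨y, hy, hyX, hxy⟩ := exists_mem_wball_inv_iInf_wnorm_sub_le (q := q) (qSt := qSt) hw X x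
  calc ⨅ z : X, wnorm q w (x - z) ≤ x ⬝ᵥ y := hxy
    _ ≤ wnorm p (fun _ => 1) x * wnorm pSt (fun _ => 1) y := by
        simpa using dotProduct_le_wnorm_mul_wnorm (r := p) (s := pSt) (v := fun _ => 1)
          (fun _ => one_pos) x y
    _ ≤ wnorm pSt (fun _ => 1) y :=
        mul_le_of_le_one_left (wnorm_nonneg _ (fun _ => zero_le_one) _) hx
    _ ≤ _ := le_ciSup (f := fun y : (wball qSt (fun i => (w i)⁻¹) ∩ {y | ∀ z ∈ X, z ⬝ᵥ y = 0} :
          Set (Fin N → ℝ)) => wnorm pSt (fun _ => 1) (y : Fin N → ℝ))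
        ⟨C, Set.forall_mem_range.2 fun y => hC _ y.2.1⟩ ⟨y, hy, hyX⟩

theorem iSup_wnorm_le_iSup_iInf_wnorm_sub (hw : ∀ i, 0 < w i) :
    (⨆ y : (wball qSt (fun i => (w i)⁻¹) ∩ {y | ∀ z ∈ X, z ⬝ᵥ y = 0} : Set (Fin N → ℝ)),
        wnorm pSt (fun _ => 1) (y : Fin N → ℝ)) ≤
      ⨆ x : (wball p (fun _ => 1) : Set (Fin N → ℝ)), ⨅ z : X, wnorm q w (x - (z : Fin N → ℝ)) := by
  have : Fact (1 ≤ p) := ⟨ENNReal.HolderConjugate.one_le p pSt⟩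
  have : Fact (1 ≤ q) := ⟨ENNReal.HolderConjugate.one_le q qSt⟩
  have hwnorm_nonneg (x : Fin N → ℝ) : 0 ≤ wnorm q w x := wnorm_nonneg q (fun i => (hw i).le) x
  have hdist_le (x : Fin N → ℝ) : ⨅ z : X, wnorm q w (x - z) ≤ wnorm q w x := by
    simpa using ciInf_le (f := fun z : X => wnorm q w (x - z))
      ⟨0, Set.forall_mem_range.2 fun _ => hwnorm_nonneg _⟩ 0
  obtain ⟨C, hC⟩ := exists_forall_mem_wball_wnorm_le (r := p) (s := q) (fun _ => one_pos) hw
  refine Real.iSup_le (fun ⟨y, hy, hyX⟩ => ?_)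
    (Real.iSup_nonneg fun _ => Real.iInf_nonneg fun _ => hwnorm_nonneg _)
  obtain ⟨x, hx, hxy⟩ : ∃ x, wnorm p (fun _ => 1) x ≤ 1 ∧ x ⬝ᵥ y = wnorm pSt (fun _ => 1) y := by
    simpa using exists_wnorm_le_one_dotProduct_eq (r := p) (s := pSt) (v := fun _ => 1)
      (fun _ => one_pos) y
  calc wnorm pSt (fun _ => 1) y ≤ ⨅ z : X, wnorm q w (x - z) := le_ciInf fun ⟨z, hz⟩ => ?_
    _ ≤ _ := le_ciSup (f := fun x : (wball p (fun _ => 1) : Set (Fin N → ℝ)) =>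
          ⨅ z : X, wnorm q w (x - z))
        ⟨C, Set.forall_mem_range.2 fun x => (hdist_le x).trans (hC _ x.2)⟩ ⟨x, hx⟩
  calc wnorm pSt (fun _ => 1) y = (x - z) ⬝ᵥ y := by rw [sub_dotProduct, hyX z hz, sub_zero, hxy]
    _ ≤ wnorm q w (x - z) * wnorm qSt (fun i => (w i)⁻¹) y := dotProduct_le_wnorm_mul_wnorm hw _ _
    _ ≤ wnorm q w (x - z) := mul_le_of_le_one_right (hwnorm_nonneg _) hy

end Duality

theorem statement0_general {N m : ℕ} (p q pSt qSt : ℝ≥0∞)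
    (hpSt : 1 / p + 1 / pSt = 1) (hqSt : 1 / q + 1 / qSt = 1)
    (w : Fin N → ℝ) (hw : ∀ i, 0 < w i) :
    kolWidth m (wball p (fun _ => 1)) (wnorm q w) =
      gelWidth m (wball qSt (fun i => (w i)⁻¹)) (wnorm pSt (fun _ => 1)) := by
  have : p.HolderConjugate pSt := ENNReal.holderConjugate_iff.2 (by simpa using hpSt)
  have : q.HolderConjugate qSt := ENNReal.holderConjugate_iff.2 (by simpa using hqSt)
  have hdual (X : Submodule ℝ (Fin N → ℝ)) :=
    le_antisymm (iSup_iInf_wnorm_sub_le_iSup_wnorm (p := p) (q := q) (pSt := pSt) (qSt := qSt) X hw)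
      (iSup_wnorm_le_iSup_iInf_wnorm_sub X hw)
  unfold kolWidth gelWidth
  congr 1
  ext r
  constructor
  · rintro ⟨X, hX, rfl⟩
    obtain ⟨M, hM⟩ := X.exists_span_range_eq_of_finrank_le hX
    exact ⟨Matrix.toLin' (Matrix.of M), by rw [hdual, Matrix.coe_ker_toLin'_of, hM]⟩
  · rintro ⟨A, rfl⟩
    set M := Matrix.of.symm (LinearMap.toMatrix' A)
    refine ⟨Submodule.span ℝ (Set.range M),
      (finrank_range_le_card _).trans_eq (Fintype.card_fin m), ?_⟩
    rw [hdual, ← Matrix.coe_ker_toLin'_of, Equiv.apply_symm_apply, Matrix.toLin'_toMatrix']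

/-- Theorem B.2, Equality: for `1 ≤ p, q ≤ ∞` with Hölder conjugates
`p*`, `q*` and positive weights `w`,
`d_m(B^p_N, ℓ^q_N(w)) = d^m(B^{q*}_N(1/w), ℓ^{p*}_N)`. -/
theorem statement0 {N m : ℕ} (hm : m ≤ N) (p q pSt qSt : ℝ≥0∞)
    (hp : 1 ≤ p) (hq : 1 ≤ q)
    (hpSt : 1 / p + 1 / pSt = 1) (hqSt : 1 / q + 1 / qSt = 1)
    (w : Fin N → ℝ) (hw : ∀ i, 0 < w i) :
    kolWidth m (wball p (fun _ => 1)) (wnorm q w) =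
      gelWidth m (wball qSt (fun i => (w i)⁻¹)) (wnorm pSt (fun _ => 1)) :=
  statement0_general p q pSt qSt hpSt hqSt w hw

end
end

section
/- (Stesin) Let N, m ∈ ℕ with N > m, let 1 ≤ q < p ≤ ∞, and let w = (w_i)_{i=1}^N be a vector of positive weights. Then the Kolmogorov m-width of the weighted ball B^p_N(w) in ℓ^q_N satisfies d_m(B^p_N(w), ℓ^q_N) = ( max_{i_1,…,i_{N−m} ∈ [N] pairwise distinct} ( ∑_{j=1}^{N−m} w_{i_j}^{pq/(p−q)} )^{1/p − 1/q} )^{−1}, where for p = ∞ the exponents are interpreted as pq/(p−q) = q and 1/p − 1/q = −1/q, so that the right-hand side equals the minimum over subsets T ⊆ [N] of cardinality N−m of (∑_{i∈T} w_i^q)^{1/q}. -/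
open Finset
open scoped ENNReal

noncomputable section

/-!
Write `1/r = 1/q - 1/p` and `C = min_{#T = N-m} (∑_{i∈T} w_i^r)^{1/r}`.

Upper bound: approximating from the coordinate subspace of vectors vanishing on a minimising `T`,
the error of `x ∈ B^p_N(w)` is its restriction to `T`, and Hölder's inequality with
`1/q = 1/p + 1/r` bounds its `ℓ^q` norm by `C`.

Lower bound: if `dim X ≤ m`, the annihilator `Y` of `X` has dimension at least `N - m`. An extreme
point `u` of the compact convex set `Y ∩ ∏ [-μ_i, μ_i]`, `μ_i = w_i^{r(1-1/q)}`, is tight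
(`|u_i| = μ_i`) on a set `T` of `N - m` coordinates: otherwise it could move both ways along a
vector of `Y` vanishing on the tight ones. As `u` annihilates `X`,
`‖x - z‖_q ≥ ⟨x, u⟩ / ‖u‖_{q'}` for `z ∈ X`. Take the `x ∈ B^p_N(w)` with
`⟨x, u⟩ = ‖w u‖_{p'}`; the box gives `|u_i|^{q'} ≤ (w_i |u_i|)^{p'}`, and on `T` also
`(w_i |u_i|)^{p'} = w_i^r`, whence `‖x - z‖_q ≥ ‖w u‖_{p'}^{p'/r} ≥ (∑_{i∈T} w_i^r)^{1/r} ≥ C`.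
-/

/-- The exponent `r` with `1 / r = 1 / q - 1 / p`. -/
def widthExponent (p q : ℝ≥0∞) : ℝ :=
  if p = ⊤ then q.toReal else p.toReal * q.toReal / (p.toReal - q.toReal)

/-- The conjugate exponent `p'` of `p`, with `∞' = 1`. -/
def dualExponent (p : ℝ≥0∞) : ℝ := if p = ⊤ then 1 else p.toReal.conjExponent

open Module Real

section LinearAlgebra

variable {ι : Type*} [Fintype ι]

def vanishingOn (S : Finset ι) : Submodule ℝ (ι → ℝ) :=
  LinearMap.ker (LinearMap.funLeft ℝ ℝ ((↑) : S → ι))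

omit [Fintype ι] in
theorem mem_vanishingOn {S : Finset ι} {v : ι → ℝ} :
    v ∈ vanishingOn S ↔ ∀ i ∈ S, v i = 0 := by
  simp [vanishingOn, funext_iff, LinearMap.funLeft]

theorem finrank_vanishingOn (S : Finset ι) :
    finrank ℝ (vanishingOn S) = Fintype.card ι - #S := by
  have hsurj := LinearMap.funLeft_surjective_of_injective ℝ ℝ _
    (Subtype.val_injective (p := (· ∈ S)))
  have := LinearMap.finrank_range_add_finrank_ker (LinearMap.funLeft ℝ ℝ ((↑) : S → ι))
  rw [LinearMap.range_eq_top.2 hsurj, finrank_top] at this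
  simp only [Module.finrank_fintype_fun_eq_card, Fintype.card_coe] at this
  rw [vanishingOn]; omega

theorem exists_ne_zero_mem_inf_vanishingOn (Y : Submodule ℝ (ι → ℝ)) (S : Finset ι)
    (hS : #S < finrank ℝ Y) : ∃ v ∈ Y ⊓ vanishingOn S, v ≠ 0 := by
  have hsum := Submodule.finrank_sup_add_finrank_inf_eq Y (vanishingOn S)
  have hsup := Submodule.finrank_le (Y ⊔ vanishingOn S)
  have hY := Submodule.finrank_le Y
  rw [finrank_vanishingOn, Module.finrank_fintype_fun_eq_card] at *
  apply Submodule.exists_mem_ne_zero_of_ne_bot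
  rw [Ne, ← Submodule.finrank_eq_zero]
  omega

theorem exists_mem_abs_le_finrank_le_card (Y : Submodule ℝ (ι → ℝ)) (μ : ι → ℝ)
    (hμ : ∀ i, 0 < μ i) :
    ∃ u ∈ Y, (∀ i, |u i| ≤ μ i) ∧ finrank ℝ Y ≤ #{i | |u i| = μ i} := by
  classical
  set box : Set (ι → ℝ) := Set.univ.pi fun i => Set.Icc (-μ i) (μ i)
  have mem_box {x : ι → ℝ} : x ∈ box ↔ ∀ i, |x i| ≤ μ i := by
    simp only [box, Set.mem_univ_pi, Set.mem_Icc, abs_le]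
  have hK : IsCompact ((Y : Set (ι → ℝ)) ∩ box) :=
    (isCompact_univ_pi fun i => isCompact_Icc).inter_left Y.closed_of_finiteDimensional
  obtain ⟨u, ⟨huY, hubox⟩, hext⟩ := hK.extremePoints_nonempty
    ⟨0, Y.zero_mem, mem_box.2 fun i => by simpa using (hμ i).le⟩
  refine ⟨u, huY, mem_box.1 hubox, ?_⟩
  by_contra! hS
  obtain ⟨v, ⟨hvY, hvS⟩, hv0⟩ := exists_ne_zero_mem_inf_vanishingOn Y _ hS
  replace hvS := mem_vanishingOn.1 hvS
  -- off the tight coordinates `u` is strictly inside the box, so it can move along `± v`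
  have hnear : ∀ᶠ t in nhds (0 : ℝ), u + t • v ∈ box := by
    simp only [mem_box, Pi.add_apply, Pi.smul_apply, smul_eq_mul]
    refine Filter.eventually_all.2 fun i => ?_
    by_cases hi : |u i| = μ i
    · simp [hvS i (by simpa using hi), hi]
    · have hcont : Filter.Tendsto (fun t : ℝ => |u i + t * v i|) (nhds 0) (nhds |u i|) := by
        have : Continuous fun t : ℝ => |u i + t * v i| := by fun_prop
        simpa using this.tendsto 0
      exact (hcont.eventually_lt_const (lt_of_le_of_ne (mem_box.1 hubox i) hi)).mono
        fun _ h => h.le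
  have hnear' := hnear.and ((continuous_neg.tendsto' (0 : ℝ) 0 neg_zero).eventually hnear)
  obtain ⟨t, ⟨hplus, hminus⟩, ht⟩ :=
    ((hnear'.filter_mono nhdsWithin_le_nhds).and (self_mem_nhdsWithin (s := Set.Ioi 0))).exists
  have hseg : u ∈ openSegment ℝ (u + t • v) (u + (-t) • v) :=
    ⟨1 / 2, 1 / 2, by norm_num, by norm_num, by norm_num, by module⟩
  have := hext ⟨Y.add_mem huY (Y.smul_mem t hvY), hplus⟩
    ⟨Y.add_mem huY (Y.smul_mem (-t) hvY), hminus⟩ hseg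
  exact hv0 ((smul_eq_zero.1 (add_eq_left.1 this)).resolve_left (ne_of_gt ht))

theorem exists_finrank_add_eq_forall_dotProduct_eq_zero (X : Submodule ℝ (ι → ℝ)) :
    ∃ Y : Submodule ℝ (ι → ℝ), finrank ℝ X + finrank ℝ Y = Fintype.card ι ∧
      ∀ u ∈ Y, ∀ z ∈ X, u ⬝ᵥ z = 0 := by
  classical
  refine ⟨X.dualAnnihilator.map (dotProductEquiv ℝ ι).symm.toLinearMap, ?_,
    fun u hu z hz => ?_⟩
  · rw [LinearEquiv.finrank_map_eq, Subspace.finrank_add_finrank_dualAnnihilator_eq,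
      Module.finrank_fintype_fun_eq_card]
  · obtain ⟨φ, hφ, rfl⟩ := hu
    have := LinearMap.congr_fun ((dotProductEquiv ℝ ι).apply_symm_apply φ) z
    rw [dotProductEquiv_apply_apply] at this
    simpa [this] using (Submodule.mem_dualAnnihilator φ).1 hφ z hz

end LinearAlgebra

section Exponents

variable {p q : ℝ≥0∞}

theorem one_le_toReal_of_lt (hq1 : 1 ≤ q) (hqp : q < p) : 1 ≤ q.toReal := by
  simpa using ENNReal.toReal_mono hqp.ne_top hq1

theorem holderTriple_widthExponent (hq1 : 1 ≤ q) (hqp : q < p) (hp : p ≠ ⊤) :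
    p.toReal.HolderTriple (widthExponent p q) q.toReal := by
  have hq := one_le_toReal_of_lt hq1 hqp
  have hlt : q.toReal < p.toReal := ENNReal.toReal_strict_mono hp hqp
  rw [Real.holderTriple_iff, widthExponent, if_neg hp]
  have hp0 : p.toReal ≠ 0 := by linarith
  refine ⟨?_, by linarith, div_pos (by nlinarith) (by linarith)⟩
  field_simp
  ring

theorem widthExponent_pos (hq1 : 1 ≤ q) (hqp : q < p) : 0 < widthExponent p q := by
  by_cases hp : p = ⊤
  · simp only [widthExponent, if_pos hp]; linarith [one_le_toReal_of_lt hq1 hqp]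
  · exact (holderTriple_widthExponent hq1 hqp hp).symm.pos

theorem holderConjugate_dualExponent (hp1 : 1 < p) (hp : p ≠ ⊤) :
    p.toReal.HolderConjugate (dualExponent p) := by
  rw [dualExponent, if_neg hp]
  exact .conjExponent (by simpa using ENNReal.toReal_strict_mono hp hp1)

theorem dualExponent_pos (hp1 : 1 < p) : 0 < dualExponent p := by
  by_cases hp : p = ⊤
  · simp [dualExponent, hp]
  · exact (holderConjugate_dualExponent hp1 hp).symm.pos

theorem inv_dualExponent (hq1 : 1 ≤ q) (hqp : q < p) :
    (dualExponent p)⁻¹ = (widthExponent p q)⁻¹ + (1 - q.toReal⁻¹) := by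
  by_cases hp : p = ⊤
  · simp [dualExponent, widthExponent, hp]
  · have h1 := (holderConjugate_dualExponent (hq1.trans_lt hqp) hp).inv_add_inv_eq_inv
    have h2 := (holderTriple_widthExponent hq1 hqp hp).inv_add_inv_eq_inv
    rw [inv_one] at h1
    linarith

theorem one_div_sub_one_div_eq_neg (hq1 : 1 ≤ q) (hqp : q < p) (hp : p ≠ ⊤) :
    1 / p.toReal - 1 / q.toReal = -(1 / widthExponent p q) := by
  have := (holderTriple_widthExponent hq1 hqp hp).inv_add_inv_eq_inv
  simp only [one_div]
  linarith

end Exponents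

section Duality

theorem rpow_le_mul_rpow_of_le_rpow {r s t a x : ℝ} (h : r.HolderTriple s t) (ha : 0 < a)
    (hx : 0 ≤ x) (hxa : x ≤ a ^ (r / s)) : x ^ s ≤ (a * x) ^ t := by
  rcases hx.eq_or_lt with rfl | hx
  · rw [zero_rpow h.symm.ne_zero, mul_zero, zero_rpow h.ne_zero']
  have hts : t < s := h.symm.lt
  calc x ^ s = x ^ t * x ^ (s - t) := by rw [← rpow_add hx, add_sub_cancel]
    _ ≤ x ^ t * (a ^ (r / s)) ^ (s - t) := by gcongr
    _ = (a * x) ^ t := by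
      have := h.inv_add_inv_eq_inv
      have := h.ne_zero; have := h.symm.ne_zero; have := h.ne_zero'
      rw [← rpow_mul ha.le, mul_rpow ha.le hx.le, mul_comm]
      congr 2
      field_simp at *
      linarith

variable {ι : Type*} [Fintype ι]

theorem sum_mul_le_of_abs_le_rpow {Q r P' : ℝ} (hQ : 1 ≤ Q) (hr : 0 < r)
    (hrel : P'⁻¹ = r⁻¹ + (1 - Q⁻¹)) {w u : ι → ℝ} (hw : ∀ i, 0 < w i)
    (hu : ∀ i, |u i| ≤ w i ^ (r * (1 - Q⁻¹))) (y : ι → ℝ) :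
    ∑ i, y i * u i ≤
      (∑ i, |y i| ^ Q) ^ (1 / Q) * (∑ i, (w i * |u i|) ^ P') ^ (1 - Q⁻¹) := by
  rcases hQ.eq_or_lt with rfl | hQ
  · simp only [inv_one, sub_self, mul_zero, rpow_zero, rpow_one, div_one, mul_one] at hu ⊢
    refine sum_le_sum fun i _ => (le_abs_self _).trans ?_
    rw [abs_mul]
    exact mul_le_of_le_one_right (abs_nonneg _) (hu i)
  have hQQ' : Q.HolderConjugate Q.conjExponent := .conjExponent hQ
  have hQ'inv : Q.conjExponent⁻¹ = 1 - Q⁻¹ := by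
    have := hQQ'.inv_add_inv_eq_inv; rw [inv_one] at this; linarith
  have htriple : r.HolderTriple Q.conjExponent P' := ⟨by rw [hrel, hQ'inv], hr, hQQ'.symm.pos⟩
  calc ∑ i, y i * u i
      ≤ (∑ i, |y i| ^ Q) ^ (1 / Q) * (∑ i, |u i| ^ Q.conjExponent) ^ (1 / Q.conjExponent) :=
        inner_le_Lp_mul_Lq _ _ _ hQQ'
    _ ≤ (∑ i, |y i| ^ Q) ^ (1 / Q) * (∑ i, (w i * |u i|) ^ P') ^ (1 / Q.conjExponent) := by
        refine mul_le_mul_of_nonneg_left (rpow_le_rpow (by positivity)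
          (sum_le_sum fun i _ => ?_) htriple.symm.one_div_nonneg) (by positivity)
        refine rpow_le_mul_rpow_of_le_rpow htriple (hw i) (abs_nonneg _) ?_
        rw [div_eq_mul_inv, hQ'inv]
        exact hu i
    _ = _ := by rw [one_div Q.conjExponent, hQ'inv]

end Duality

theorem kolWidth_eq_of_forall {N m : ℕ} {K : Set (Fin N → ℝ)} {nrm : (Fin N → ℝ) → ℝ}
    {C : ℝ} (hnrm : ∀ y, 0 ≤ nrm y) (hK : BddAbove (nrm '' K))
    (hlow : ∀ X : Submodule ℝ (Fin N → ℝ), finrank ℝ X ≤ m →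
      ∃ x ∈ K, ∀ z ∈ X, C ≤ nrm (x - z))
    (hup : ∃ X : Submodule ℝ (Fin N → ℝ), finrank ℝ X ≤ m ∧
      ∀ x ∈ K, ∃ z ∈ X, nrm (x - z) ≤ C) :
    kolWidth m K nrm = C := by
  have hbelow (X : Submodule ℝ (Fin N → ℝ)) (x : Fin N → ℝ) :
      BddBelow (Set.range fun z : X => nrm (x - z)) :=
    ⟨0, Set.forall_mem_range.2 fun _ => hnrm _⟩
  have hle (X : Submodule ℝ (Fin N → ℝ)) (hX : finrank ℝ X ≤ m) :
      C ≤ ⨆ x : K, ⨅ z : X, nrm ((x : Fin N → ℝ) - z) := by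
    obtain ⟨x, hx, hC⟩ := hlow X hX
    obtain ⟨B, hB⟩ := hK
    refine le_ciSup_of_le ⟨B, Set.forall_mem_range.2 fun y => ?_⟩ ⟨x, hx⟩
      (le_ciInf fun z => hC z z.2)
    exact (ciInf_le (hbelow X y) 0).trans (by simpa using hB ⟨y, y.2, rfl⟩)
  obtain ⟨X₀, hX₀, hz⟩ := hup
  have : Nonempty K := let ⟨x, hx, _⟩ := hlow ⊥ (by simp); ⟨⟨x, hx⟩⟩
  refine IsLeast.csInf_eq ⟨⟨X₀, hX₀, le_antisymm (hle X₀ hX₀) (ciSup_le fun x => ?_)⟩,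
    fun r ⟨X, hX, hr⟩ => hr ▸ hle X hX⟩
  obtain ⟨z, hzX, hzC⟩ := hz x x.2
  exact (ciInf_le (hbelow X₀ x) ⟨z, hzX⟩).trans hzC

section WeightedBall

variable {N : ℕ} {p q : ℝ≥0∞} {w x : Fin N → ℝ}

theorem wnorm_one_of_ne_top (hq : q ≠ ⊤) (y : Fin N → ℝ) :
    wnorm q (fun _ => 1) y = (∑ i, |y i| ^ q.toReal) ^ (1 / q.toReal) := by
  simp [wnorm, hq]

theorem wnorm_nonneg_s2 (hw : ∀ i, 0 ≤ w i) (y : Fin N → ℝ) : 0 ≤ wnorm p w y := by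
  unfold wnorm
  split_ifs
  · exact Real.iSup_nonneg fun i => div_nonneg (abs_nonneg _) (hw i)
  · exact rpow_nonneg (sum_nonneg fun i _ => rpow_nonneg (div_nonneg (abs_nonneg _) (hw i)) _) _

theorem mem_wball_top_iff (hw : ∀ i, 0 < w i) : x ∈ wball ⊤ w ↔ ∀ i, |x i| ≤ w i := by
  simp only [wball, wnorm, if_pos, Set.mem_ofPred_eq]
  refine ⟨fun h i => ?_, fun h => Real.iSup_le (fun i => ?_) zero_le_one⟩
  · exact (div_le_one (hw i)).1 ((le_ciSup (Set.finite_range _).bddAbove i).trans h)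
  · exact (div_le_one (hw i)).2 (h i)

theorem mem_wball_iff_of_ne_top (hp : p ≠ ⊤) (hp0 : 0 < p.toReal) (hw : ∀ i, 0 ≤ w i) :
    x ∈ wball p w ↔ ∑ i, (|x i| / w i) ^ p.toReal ≤ 1 := by
  simp only [wball, wnorm, if_neg hp, Set.mem_ofPred_eq, one_div]
  rw [rpow_inv_le_iff_of_pos (sum_nonneg fun i _ => by have := hw i; positivity) zero_le_one hp0,
    one_rpow]

theorem exists_mem_wball_sum_mul_eq (hp : 1 < p) (hw : ∀ i, 0 < w i) (v : Fin N → ℝ)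
    (hS : 0 < ∑ i, (w i * |v i|) ^ dualExponent p) :
    ∃ x ∈ wball p w, ∑ i, x i * v i =
      (∑ i, (w i * |v i|) ^ dualExponent p) ^ (1 / dualExponent p) := by
  set P' := dualExponent p
  set S := ∑ i, (w i * |v i|) ^ P'
  have hP' : 0 < P' := dualExponent_pos hp
  set D := S ^ (1 / P')
  have hD : 0 < D := rpow_pos_of_pos hS _
  have hDS : D ^ P' = S := by rw [← rpow_mul hS.le, one_div_mul_cancel hP'.ne', rpow_one]
  set a : Fin N → ℝ := fun i => w i * |v i| / D
  have ha : ∀ i, 0 ≤ a i := fun i => by have := hw i; positivity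
  have hsum : ∑ i, a i ^ P' = 1 := by
    simp only [a, div_rpow (mul_nonneg (hw _).le (abs_nonneg _)) hD.le, ← sum_div, hDS]
    exact div_self hS.ne'
  -- the extremal vector of Hölder's inequality for the pair `(p, P')`
  set x : Fin N → ℝ := fun i => SignType.sign (v i) * w i * a i ^ (P' - 1)
  have hx : ∀ i, |x i| / w i ≤ a i ^ (P' - 1) := by
    intro i
    have hsign : |(SignType.sign (v i) : ℝ)| ≤ 1 := by
      rcases lt_trichotomy (v i) 0 with h | h | h <;> simp [h]
    rw [div_le_iff₀ (hw i), abs_mul, abs_mul, abs_of_pos (hw i),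
      abs_of_nonneg (rpow_nonneg (ha i) _), mul_assoc, mul_comm _ (w i)]
    exact mul_le_of_le_one_left (mul_nonneg (hw i).le (rpow_nonneg (ha i) _)) hsign
  refine ⟨x, ?_, ?_⟩
  · by_cases hptop : p = ⊤
    · have hP'1 : P' = 1 := by simp [P', dualExponent, hptop]
      subst hptop
      rw [mem_wball_top_iff hw]
      intro i
      have := hx i
      rwa [hP'1, sub_self, rpow_zero, div_le_one (hw i)] at this
    · have hconj := holderConjugate_dualExponent hp hptop
      rw [mem_wball_iff_of_ne_top hptop hconj.pos fun i => (hw i).le, ← hsum]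
      refine sum_le_sum fun i _ => ?_
      have hexp : (P' - 1) * p.toReal = P' := by
        have h := hconj.inv_add_inv_eq_inv
        have := hconj.ne_zero; have := hconj.symm.ne_zero
        field_simp at h ⊢
        linarith
      calc (|x i| / w i) ^ p.toReal ≤ (a i ^ (P' - 1)) ^ p.toReal :=
            rpow_le_rpow (div_nonneg (abs_nonneg _) (hw i).le) (hx i) hconj.nonneg
        _ = a i ^ P' := by rw [← rpow_mul (ha i), hexp]
  · calc ∑ i, x i * v i = ∑ i, D * a i ^ P' := by
          refine sum_congr rfl fun i _ => ?_
          rw [show P' = 1 + (P' - 1) by ring, rpow_add' (ha i) (by simpa using hP'.ne'), rpow_one]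
          simp only [x, a]
          rw [← sign_mul_self (v i)]
          field_simp
      _ = D := by rw [← mul_sum, hsum, mul_one]

theorem exists_mem_wball_le_wnorm_sub (hq1 : 1 ≤ q) (hqp : q < p) (hw : ∀ i, 0 < w i)
    {X : Submodule ℝ (Fin N → ℝ)} {u : Fin N → ℝ} (huX : ∀ z ∈ X, u ⬝ᵥ z = 0)
    (hu : ∀ i, |u i| ≤ w i ^ (widthExponent p q * (1 - q.toReal⁻¹)))
    {T : Finset (Fin N)} (hT : T.Nonempty)
    (huT : ∀ i ∈ T, |u i| = w i ^ (widthExponent p q * (1 - q.toReal⁻¹))) :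
    ∃ x ∈ wball p w, ∀ z ∈ X,
      (∑ i ∈ T, w i ^ widthExponent p q) ^ (1 / widthExponent p q) ≤
        wnorm q (fun _ => 1) (x - z) := by
  set r := widthExponent p q
  set P' := dualExponent p
  have hr : 0 < r := widthExponent_pos hq1 hqp
  have hrel : P'⁻¹ = r⁻¹ + (1 - q.toReal⁻¹) := inv_dualExponent hq1 hqp
  set S := ∑ i, (w i * |u i|) ^ P'
  have hTS : ∑ i ∈ T, w i ^ r ≤ S := by
    have hexp : (1 + r * (1 - q.toReal⁻¹)) * P' = r := by
      have hP' : P' ≠ 0 := (dualExponent_pos (hq1.trans_lt hqp)).ne'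
      rw [← add_sub_cancel_left r⁻¹ (1 - q.toReal⁻¹), ← hrel]
      field_simp
      ring
    refine (sum_le_sum fun i hi => le_of_eq ?_).trans
      (sum_le_sum_of_subset_of_nonneg (subset_univ T) fun i _ _ => ?_)
    · have hθ : 0 ≤ 1 - q.toReal⁻¹ :=
        sub_nonneg.2 (inv_le_one_of_one_le₀ (one_le_toReal_of_lt hq1 hqp))
      rw [huT i hi, ← rpow_one_add' (hw i).le (by nlinarith), ← rpow_mul (hw i).le, hexp]
    · exact rpow_nonneg (mul_nonneg (hw i).le (abs_nonneg _)) _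
  have hS : 0 < S := (sum_pos (fun i _ => rpow_pos_of_pos (hw i) _) hT).trans_le hTS
  obtain ⟨x, hx, hxu⟩ := exists_mem_wball_sum_mul_eq (hq1.trans_lt hqp) hw u hS
  refine ⟨x, hx, fun z hz => ?_⟩
  have hpair : ∑ i, (x - z) i * u i = S ^ (1 / P') := by
    have h0 : ∑ i, z i * u i = 0 := by
      rw [← huX z hz, dotProduct]
      simp only [mul_comm]
    simp only [Pi.sub_apply, sub_mul, sum_sub_distrib, hxu, h0, sub_zero, S, P']
  have hdual := sum_mul_le_of_abs_le_rpow (one_le_toReal_of_lt hq1 hqp) hr hrel hw hu (x - z)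
  rw [hpair, ← wnorm_one_of_ne_top hqp.ne_top] at hdual
  calc (∑ i ∈ T, w i ^ r) ^ (1 / r) ≤ S ^ (1 / r) :=
        rpow_le_rpow (sum_nonneg fun i _ => (rpow_pos_of_pos (hw i) _).le) hTS (by positivity)
    _ = S ^ (1 / P') / S ^ (1 - q.toReal⁻¹) := by
      rw [← rpow_sub hS, one_div, one_div, hrel, add_sub_cancel_right]
    _ ≤ wnorm q (fun _ => 1) (x - z) :=
      div_le_of_le_mul₀ (by positivity) (wnorm_nonneg_s2 (fun _ => zero_le_one) _) hdual

theorem sum_abs_rpow_rpow_le_of_mem_wball (hq1 : 1 ≤ q) (hqp : q < p) (hw : ∀ i, 0 < w i)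
    (hx : x ∈ wball p w) (T : Finset (Fin N)) :
    (∑ i ∈ T, |x i| ^ q.toReal) ^ (1 / q.toReal) ≤
      (∑ i ∈ T, w i ^ widthExponent p q) ^ (1 / widthExponent p q) := by
  have hQ : 0 < q.toReal := zero_lt_one.trans_le (one_le_toReal_of_lt hq1 hqp)
  by_cases hp : p = ⊤
  · subst hp
    rw [mem_wball_top_iff hw] at hx
    simp only [widthExponent, if_pos]
    gcongr with i
    exact hx i
  have h := holderTriple_widthExponent hq1 hqp hp
  rw [mem_wball_iff_of_ne_top hp h.pos fun i => (hw i).le] at hx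
  have hsub : ∑ i ∈ T, (|x i| / w i) ^ p.toReal ≤ 1 :=
    (sum_le_sum_of_subset_of_nonneg (subset_univ T) fun i _ _ =>
      rpow_nonneg (div_nonneg (abs_nonneg _) (hw i).le) _).trans hx
  have hHolder := Lr_rpow_le_Lp_mul_Lq_of_nonneg T h (f := fun i => |x i| / w i) (g := w)
    (fun i _ => by have := hw i; positivity) (fun i _ => (hw i).le)
  simp only [div_mul_cancel₀ _ (hw _).ne'] at hHolder
  calc (∑ i ∈ T, |x i| ^ q.toReal) ^ (1 / q.toReal)
      ≤ ((∑ i ∈ T, w i ^ widthExponent p q) ^ (q.toReal / widthExponent p q)) ^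
          (1 / q.toReal) := by
        gcongr
        refine hHolder.trans (mul_le_of_le_one_left
          (rpow_nonneg (sum_nonneg fun i _ => (rpow_pos_of_pos (hw i) _).le) _) ?_)
        exact rpow_le_one (sum_nonneg fun i _ => rpow_nonneg
          (div_nonneg (abs_nonneg _) (hw i).le) _) hsub (div_nonneg hQ.le h.nonneg)
    _ = _ := by
      rw [← rpow_mul (sum_nonneg fun i _ => by have := hw i; positivity)]
      field_simp

theorem exists_mem_vanishingOn_wnorm_sub_le (hq1 : 1 ≤ q) (hqp : q < p) (hw : ∀ i, 0 < w i)
    (hx : x ∈ wball p w) (T : Finset (Fin N)) :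
    ∃ z ∈ vanishingOn T, wnorm q (fun _ => 1) (x - z) ≤
      (∑ i ∈ T, w i ^ widthExponent p q) ^ (1 / widthExponent p q) := by
  classical
  refine ⟨T.piecewise 0 x, mem_vanishingOn.2 fun i hi => by simp [hi], ?_⟩
  have hQ : q.toReal ≠ 0 := (zero_lt_one.trans_le (one_le_toReal_of_lt hq1 hqp)).ne'
  rw [wnorm_one_of_ne_top hqp.ne_top]
  convert sum_abs_rpow_rpow_le_of_mem_wball hq1 hqp hw hx T using 2
  simp [Finset.piecewise, apply_ite, zero_rpow hQ, sum_ite_mem]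

theorem exists_card_eq_mem_wball_le_wnorm_sub {m : ℕ} (hm : m < N) (hq1 : 1 ≤ q) (hqp : q < p)
    (hw : ∀ i, 0 < w i) (X : Submodule ℝ (Fin N → ℝ)) (hX : finrank ℝ X ≤ m) :
    ∃ T : Finset (Fin N), #T = N - m ∧ ∃ x ∈ wball p w, ∀ z ∈ X,
      (∑ i ∈ T, w i ^ widthExponent p q) ^ (1 / widthExponent p q) ≤
        wnorm q (fun _ => 1) (x - z) := by
  obtain ⟨Y, hXY, hYX⟩ := exists_finrank_add_eq_forall_dotProduct_eq_zero X
  obtain ⟨u, huY, hu, hcard⟩ := exists_mem_abs_le_finrank_le_card Y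
    (fun i => w i ^ (widthExponent p q * (1 - q.toReal⁻¹))) fun i => rpow_pos_of_pos (hw i) _
  rw [Fintype.card_fin] at hXY
  obtain ⟨T, hTsub, hT⟩ :=
    exists_subset_card_eq ((by omega : N - m ≤ finrank ℝ Y).trans hcard)
  exact ⟨T, hT, exists_mem_wball_le_wnorm_sub hq1 hqp hw (hYX u huY) hu
    (card_pos.1 (by omega)) fun i hi => (mem_filter.1 (hTsub hi)).2⟩

theorem isLeast_kolWidth_wball {m : ℕ} (hm : m < N) (hq1 : 1 ≤ q) (hqp : q < p)
    (hw : ∀ i, 0 < w i) :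
    IsLeast {c | ∃ T : Finset (Fin N), #T = N - m ∧
        c = (∑ i ∈ T, w i ^ widthExponent p q) ^ (1 / widthExponent p q)}
      (kolWidth m (wball p w) (wnorm q fun _ => 1)) := by
  set r := widthExponent p q
  obtain ⟨T₀, hT₀, hT₀min⟩ := exists_min_image (powersetCard (N - m) univ)
    (fun T => ∑ i ∈ T, w i ^ r) (powersetCard_nonempty.2 (by simp))
  have hT₀card : #T₀ = N - m := (mem_powersetCard.1 hT₀).2
  set C := (∑ i ∈ T₀, w i ^ r) ^ (1 / r)
  have hmin (T : Finset (Fin N)) (hT : #T = N - m) : C ≤ (∑ i ∈ T, w i ^ r) ^ (1 / r) :=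
    rpow_le_rpow (sum_nonneg fun i _ => (rpow_pos_of_pos (hw i) _).le)
      (hT₀min T (mem_powersetCard.2 ⟨subset_univ T, hT⟩))
      (one_div_nonneg.2 (widthExponent_pos hq1 hqp).le)
  have hwidth : kolWidth m (wball p w) (wnorm q fun _ => 1) = C := by
    refine kolWidth_eq_of_forall (wnorm_nonneg_s2 fun _ => zero_le_one)
      ⟨(∑ i, w i ^ r) ^ (1 / r), ?_⟩ (fun X hX => ?_) ⟨vanishingOn T₀, ?_,
        fun x hx => exists_mem_vanishingOn_wnorm_sub_le hq1 hqp hw hx T₀⟩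
    · rintro _ ⟨x, hx, rfl⟩
      rw [wnorm_one_of_ne_top hqp.ne_top]
      exact sum_abs_rpow_rpow_le_of_mem_wball hq1 hqp hw hx univ
    · obtain ⟨T, hT, x, hx, hxz⟩ := exists_card_eq_mem_wball_le_wnorm_sub hm hq1 hqp hw X hX
      exact ⟨x, hx, fun z hz => (hmin T hT).trans (hxz z hz)⟩
    · rw [finrank_vanishingOn, hT₀card, Fintype.card_fin]
      omega
  rw [hwidth]
  exact ⟨⟨T₀, hT₀card, rfl⟩, fun _ ⟨T, hT, hc⟩ => hc ▸ hmin T hT⟩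

end WeightedBall

/-- Stesin: for `1 ≤ q < p ≤ ∞` and positive weights `w`, with `N > m`,
`d_m(B^p_N(w), ℓ^q_N)` equals the inverse of the maximum over subsets `T ⊆ [N]` of
cardinality `N - m` of `(∑_{i ∈ T} w_i^{pq/(p-q)})^{1/p - 1/q}`; for `p = ∞` this is
interpreted as the minimum over such `T` of `(∑_{i ∈ T} w_i^q)^{1/q}`. -/
theorem statement2 {N m : ℕ} (hm : m < N) (p q : ℝ≥0∞) (hq1 : 1 ≤ q) (hqp : q < p)
    (w : Fin N → ℝ) (hw : ∀ i, 0 < w i) :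
    kolWidth m (wball p w) (wnorm q (fun _ => 1)) =
      (if p = ⊤ then
        sInf { r | ∃ T : Finset (Fin N), T.card = N - m ∧
          r = (∑ i ∈ T, w i ^ q.toReal) ^ (1 / q.toReal) }
      else
        (sSup { r | ∃ T : Finset (Fin N), T.card = N - m ∧
          r = (∑ i ∈ T, w i ^ (p.toReal * q.toReal / (p.toReal - q.toReal))) ^
                (1 / p.toReal - 1 / q.toReal) })⁻¹) := by
  have h := isLeast_kolWidth_wball hm hq1 hqp hw
  split_ifs with hp
  · simpa only [widthExponent, if_pos hp] using h.csInf_eq.symm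
  have hsum (T : Finset (Fin N)) : 0 ≤ ∑ i ∈ T, w i ^ widthExponent p q :=
    sum_nonneg fun i _ => (rpow_pos_of_pos (hw i) _).le
  obtain ⟨T₀, hT₀, hT₀eq⟩ := h.1
  have hpos : 0 < kolWidth m (wball p w) (wnorm q fun _ => 1) := hT₀eq ▸ rpow_pos_of_pos
    (sum_pos (fun i _ => rpow_pos_of_pos (hw i) _) (card_pos.1 (by omega))) _
  rw [← show widthExponent p q = _ from if_neg hp, one_div_sub_one_div_eq_neg hq1 hqp hp,
    ← inv_inv (kolWidth _ _ _)]
  refine congrArg _ (IsGreatest.csSup_eq ⟨?_, ?_⟩).symm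
  · exact ⟨T₀, hT₀, by rw [rpow_neg (hsum T₀), hT₀eq]⟩
  · rintro _ ⟨T, hT, rfl⟩
    rw [rpow_neg (hsum T)]
    exact inv_anti₀ hpos (h.2 ⟨T, hT, rfl⟩)
end
end

section
/- Let X be a normed vector space over ℝ, m ∈ ℕ, and K ⊆ X a subset satisfying −K = K (i.e. x ∈ K iff −x ∈ K). Then the Gelfand m-width is bounded by the adaptive compressive m-width: d^m(K, X) ≤ E^m_ada(K, X). -/
open scoped ENNReal NNReal

noncomputable section

/-- `Γ : X → ℝ^m` is an adaptive sampling operator: there are maps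
`L i : X × ℝ^i → ℝ`, bounded and linear in the first argument, such that the `i`-th
sample `Γ(x) i` equals `L i` applied to `x` and the previous samples. -/
def IsAdaptive {X : Type*} [NormedAddCommGroup X] [NormedSpace ℝ X] {m : ℕ}
    (Γ : X → (Fin m → ℝ)) : Prop :=
  ∃ L : (i : Fin m) → X → (Fin i.val → ℝ) → ℝ,
    (∀ i v, IsBoundedLinearMap ℝ fun x => L i x v) ∧
    ∀ x i, Γ x i = L i x fun j => Γ x ⟨j.val, j.isLt.trans i.isLt⟩

/-- The Gelfand `m`-width of a subset `K` of a normed space `X`: the infimum over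
subspaces of codimension at most `m` (equivalently, kernels of linear maps
`A : X → ℝ^m`) of `sup { ‖x‖ : x ∈ K ∩ ker A }`. -/
def gelfandWidth {X : Type*} [NormedAddCommGroup X] [NormedSpace ℝ X]
    (m : ℕ) (K : Set X) : ℝ≥0∞ :=
  ⨅ A : X →ₗ[ℝ] (Fin m → ℝ),
    ⨆ x ∈ K ∩ (LinearMap.ker A : Set X), (‖x‖₊ : ℝ≥0∞)

/-- The adaptive compressive `m`-width of a subset `K` of a normed space `X`:
the infimum over adaptive sampling operators `Γ : X → ℝ^m` and arbitrary
reconstruction maps `Δ : ℝ^m → X` of `sup_{x ∈ K} ‖x - Δ(Γ(x))‖`. -/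
def adaptiveCompressiveWidth {X : Type*} [NormedAddCommGroup X] [NormedSpace ℝ X]
    (m : ℕ) (K : Set X) : ℝ≥0∞ :=
  ⨅ (Γ : X → (Fin m → ℝ)) (_ : IsAdaptive Γ) (Δ : (Fin m → ℝ) → X),
    ⨆ x ∈ K, (‖x - Δ (Γ x)‖₊ : ℝ≥0∞)

/-- Theorem 4.1: if `K ⊆ X` is symmetric (`-K = K`), then
`d^m(K, X) ≤ E^m_ada(K, X)`. -/
theorem statement4 {X : Type*} [NormedAddCommGroup X] [NormedSpace ℝ X]
    (m : ℕ) (K : Set X) (hK : -K = K) :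
    gelfandWidth m K ≤ adaptiveCompressiveWidth m K := by
  simp only [adaptiveCompressiveWidth]
  refine le_iInf fun Γ => le_iInf fun hΓ => le_iInf fun Δ => ?_
  obtain ⟨L, hbl, hΓL⟩ := hΓ
  set A : X →ₗ[ℝ] (Fin m → ℝ) :=
    LinearMap.pi fun i => IsLinearMap.mk' (fun x => L i x 0) (hbl i 0).toIsLinearMap with hA
  have hAx : ∀ x i, A x i = L i x 0 := fun x i => rfl
  -- on ker A, Γ vanishes
  have hker' : ∀ x, A x = 0 → ∀ n : ℕ, ∀ hn : n < m, Γ x ⟨n, hn⟩ = 0 := by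
    intro x hx n
    induction n using Nat.strong_induction_on with
    | _ n IH =>
      intro hn
      rw [hΓL x ⟨n, hn⟩]
      have : (fun j : Fin (⟨n, hn⟩ : Fin m).val =>
          Γ x ⟨j.val, j.isLt.trans (⟨n, hn⟩ : Fin m).isLt⟩) = 0 := by
        funext j
        exact IH j.val j.isLt _
      rw [this]
      have := congrFun hx ⟨n, hn⟩
      rw [hAx] at this
      exact this
  have hker : ∀ x, A x = 0 → ∀ i : Fin m, Γ x i = 0 := fun x hx i => hker' x hx i.val i.isLt
  refine le_trans (iInf_le _ A) ?_
  refine iSup_le fun x => iSup_le fun hx => ?_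
  obtain ⟨hxK, hxker⟩ := hx
  have hxker' : A x = 0 := hxker
  have hnegK : -x ∈ K := by
    rw [← hK]; exact Set.neg_mem_neg.mpr hxK
  have hnegker : A (-x) = 0 := by rw [map_neg, hxker']; simp
  have hΓx : Γ x = Γ (-x) := by
    funext i; rw [hker x hxker' i, hker (-x) hnegker i]
  set d := Δ (Γ x) with hd
  have key : ‖x‖ ≤ max ‖x - d‖ ‖-x - d‖ := by
    have h2 : (x - d) - (-x - d) = (2:ℝ) • x := by
      module
    have := norm_sub_le (x - d) (-x - d)
    rw [h2] at this
    rw [norm_smul] at this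
    simp only [Real.norm_ofNat] at this
    nlinarith [le_max_left ‖x - d‖ ‖-x - d‖, le_max_right ‖x - d‖ ‖-x - d‖]
  have key' : (‖x‖₊ : ℝ≥0∞) ≤ max (‖x - d‖₊ : ℝ≥0∞) (‖-x - d‖₊ : ℝ≥0∞) := by
    rw [le_max_iff]
    rcases le_max_iff.mp key with h | h
    · left; exact_mod_cast (by exact_mod_cast h : ‖x‖₊ ≤ ‖x - d‖₊)
    · right; exact_mod_cast (by exact_mod_cast h : ‖x‖₊ ≤ ‖-x - d‖₊)
  refine key'.trans (max_le ?_ ?_)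
  · exact le_iSup₂_of_le x hxK (by rw [hd])
  · refine le_iSup₂_of_le (-x) hnegK ?_
    rw [hd, hΓx]


end
end

section
/- Let N, m ∈ ℕ with m < N and let w = (w_i)_{i=1}^N be a vector of positive weights with nonincreasing rearrangement w_{(1)} ≥ w_{(2)} ≥ … ≥ w_{(N)}. Then for every adaptive sampling operator Γ : ℓ^2_N → ℝ^m and every map Δ : ℝ^m → ℝ^N, the worst-case ℓ^2 recovery error over the weighted ℓ^∞ ball satisfies sup_{x ∈ B^∞_N(w)} ‖x − Δ(Γ(x))‖_2 ≥ ( ∑_{j=m+1}^{N} w_{(j)}^2 )^{1/2}. -/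
/-!
The first samples `φ x i = L i x 0` form a linear map, and by induction on `i` every `x ∈ ker φ`
has `Γ x = Γ (-x) = 0`; whatever `Δ 0` is, it lies at distance at least `‖x‖` from `x` or `-x`.
An extreme point `x` of the compact set `ker φ ∩ B^∞_N(w)` has `|x i| < w i` for at most `m`
indices, since otherwise a nonzero vector of `ker φ` supported on those indices could move `x`
in both directions. On the remaining, at least `N - m`, indices `|x i| = w i`, so `‖x‖²` is at
least the sum of the `N - m` smallest `w i ^ 2`.
-/

open Finset

open Topology Module

theorem IsAdaptive.exists_linearMap_ker_subset_preimage_zero {X : Type*} [NormedAddCommGroup X]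
    [NormedSpace ℝ X] {m : ℕ} {Γ : X → (Fin m → ℝ)} (hΓ : IsAdaptive Γ) :
    ∃ φ : X →ₗ[ℝ] (Fin m → ℝ), (LinearMap.ker φ : Set X) ⊆ Γ ⁻¹' {0} := by
  obtain ⟨L, hL, hΓL⟩ := hΓ
  refine ⟨LinearMap.pi fun i => (hL i 0).toIsLinearMap.mk', fun x hx => funext fun i => ?_⟩
  induction i using WellFoundedLT.induction with
  | _ i ih =>
    have hprev : (fun j : Fin i => Γ x ⟨j, j.isLt.trans i.isLt⟩) = 0 :=
      funext fun j => ih _ j.isLt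
    rw [hΓL, hprev]
    exact congrFun hx i

theorem exists_ne_zero_mem_ker_forall_notMem_eq_zero {K V ι : Type*} [Field K] [AddCommGroup V]
    [Module K V] [FiniteDimensional K V] [Fintype ι] (φ : (ι → K) →ₗ[K] V) (F : Finset ι)
    (hF : finrank K V < #F) :
    ∃ z, z ≠ 0 ∧ φ z = 0 ∧ ∀ i ∉ F, z i = 0 := by
  let e := Function.ExtendByZero.linearMap K ((↑) : F → ι)
  have hker : LinearMap.ker (φ ∘ₗ e) ≠ ⊥ :=
    LinearMap.ker_ne_bot_of_finrank_lt (by simpa using hF)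
  obtain ⟨z, hz, hz0⟩ := (Submodule.ne_bot_iff _).1 hker
  refine ⟨e z, fun he => hz0 (funext fun i => ?_), hz, fun i hi => ?_⟩
  · simpa [e, Subtype.val_injective.extend_apply] using congrFun he i
  · simp [e, Function.extend_apply', hi]

theorem Finset.sum_le_sum_of_card_le_of_forall_le {ι : Type*} {A B : Finset ι} {g : ι → ℝ}
    (hg : ∀ k ∈ B, 0 ≤ g k) (hAB : #A ≤ #B) (hle : ∀ j ∈ A, ∀ k ∈ B, g j ≤ g k) :
    ∑ j ∈ A, g j ≤ ∑ k ∈ B, g k := by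
  rcases A.eq_empty_or_nonempty with rfl | hA
  · simpa using sum_nonneg hg
  obtain ⟨j, hj, hmax⟩ := A.exists_max_image g hA
  calc ∑ j ∈ A, g j ≤ #A • max (g j) 0 :=
        sum_le_card_nsmul _ _ _ fun i hi => le_max_of_le_left (hmax i hi)
    _ ≤ #B • max (g j) 0 := nsmul_le_nsmul_left (le_max_right _ _) hAB
    _ ≤ ∑ k ∈ B, g k := card_nsmul_le_sum _ _ _ fun k hk => max_le (hle j hj k hk) (hg k hk)

theorem Antitone.sum_tail_le_sum_of_card_compl_le {n m : ℕ} {g : Fin n → ℝ} (hg : Antitone g)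
    (hg0 : ∀ j, 0 ≤ g j) {D : Finset (Fin n)} (hD : #Dᶜ ≤ m) :
    ∑ j ∈ univ.filter (fun j : Fin n => m ≤ (j : ℕ)), g j ≤ ∑ j ∈ D, g j := by
  set T := univ.filter (fun j : Fin n => m ≤ (j : ℕ))
  have hT : #T ≤ #D := by
    have h1 := card_filter_add_card_filter_not (s := univ) (fun j : Fin n => (j : ℕ) < m)
    have h2 : #{j : Fin n | (j : ℕ) < m} = min n m := Fin.card_filter_val_lt
    have h3 := card_add_card_compl D
    simp only [not_lt, card_univ, Fintype.card_fin] at h1 h3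
    change _ + #T = _ at h1
    omega
  rw [← sum_sdiff_le_sum_sdiff]
  refine sum_le_sum_of_card_le_of_forall_le (fun k _ => hg0 k)
    (card_sdiff_le_card_sdiff_iff.2 hT) fun j hj k hk => ?_
  simp only [T, mem_sdiff, mem_filter, mem_univ, true_and, not_le] at hj hk
  exact hg (Fin.mk_le_mk.2 (hk.2.le.trans hj.1))

section Box

variable {ι V : Type*} [Fintype ι] [AddCommGroup V] [Module ℝ V] [FiniteDimensional ℝ V]

theorem card_filter_abs_lt_le_finrank_of_mem_extremePoints {φ : (ι → ℝ) →ₗ[ℝ] V} {w x : ι → ℝ}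
    (hx : x ∈ ((LinearMap.ker φ : Set (ι → ℝ)) ∩ {y | ∀ i, |y i| ≤ w i}).extremePoints ℝ) :
    #{i | |x i| < w i} ≤ finrank ℝ V := by
  set F := univ.filter fun i => |x i| < w i
  by_contra! hF
  obtain ⟨z, hz0, hz, hzF⟩ := exists_ne_zero_mem_ker_forall_notMem_eq_zero φ F hF
  set U := {y : ι → ℝ | ∀ i ∈ F, |y i| < w i}
  have hU : U ∈ 𝓝 x := by
    refine IsOpen.mem_nhds ?_ fun i hi => (mem_filter.1 hi).2
    simpa only [U, Set.ofPred_forall] using isOpen_biInter_finset (s := F) fun i _ =>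
      isOpen_lt (continuous_apply i).abs continuous_const
  have hperturb : ∀ s : ℝ, x + s • z ∈ U →
      x + s • z ∈ (LinearMap.ker φ : Set (ι → ℝ)) ∩ {y | ∀ i, |y i| ≤ w i} := by
    refine fun s hs => ⟨by simp [hz, LinearMap.mem_ker.1 hx.1.1], fun i => ?_⟩
    by_cases hi : i ∈ F
    · exact (hs i hi).le
    · simpa [hzF i hi] using hx.1.2 i
  have hcont : ∀ c : ℝ, ∀ᶠ s in 𝓝 (0 : ℝ), x + (c * s) • z ∈ U := fun c =>
    (show Continuous fun s : ℝ => x + (c * s) • z by fun_prop).continuousAt.preimage_mem_nhds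
      (by simpa using hU)
  obtain ⟨t, ⟨htp, htm⟩, ht⟩ :=
    (((hcont 1).and (hcont (-1))).filter_mono nhdsWithin_le_nhds |>.and
      (self_mem_nhdsWithin (s := Set.Ioi 0))).exists
  have hmid : x ∈ openSegment ℝ (x + t • z) (x + (-t) • z) :=
    ⟨1 / 2, 1 / 2, by norm_num, by norm_num, by norm_num, by module⟩
  have := hx.2 (hperturb t (by simpa using htp)) (hperturb (-t) (by simpa using htm)) hmid
  exact hz0 ((smul_eq_zero.1 (add_eq_left.1 this)).resolve_left (ne_of_gt ht))

theorem exists_mem_ker_abs_le_card_filter_abs_lt_le_finrank {w : ι → ℝ} (hw : ∀ i, 0 ≤ w i)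
    (φ : (ι → ℝ) →ₗ[ℝ] V) :
    ∃ x, φ x = 0 ∧ (∀ i, |x i| ≤ w i) ∧ #{i | |x i| < w i} ≤ finrank ℝ V := by
  have hcompact : IsCompact ((LinearMap.ker φ : Set (ι → ℝ)) ∩ {y | ∀ i, |y i| ≤ w i}) := by
    have hbox : {y : ι → ℝ | ∀ i, |y i| ≤ w i} = Set.univ.pi fun i => Set.Icc (-w i) (w i) := by
      ext y
      simp only [Set.mem_ofPred_eq, Set.mem_pi, Set.mem_univ, true_implies, Set.mem_Icc, abs_le]
    rw [hbox]
    exact (isCompact_univ_pi fun i => isCompact_Icc).inter_left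
      ((LinearMap.ker φ).closed_of_finiteDimensional)
  obtain ⟨x, hx⟩ := hcompact.extremePoints_nonempty ⟨0, by simp, by simpa using hw⟩
  exact ⟨x, hx.1.1, hx.1.2, card_filter_abs_lt_le_finrank_of_mem_extremePoints hx⟩

end Box

theorem sum_sq_tail_le_sum_sq {N m : ℕ} {w x : Fin N → ℝ} (hw : ∀ i, 0 ≤ w i)
    (σ : Equiv.Perm (Fin N)) (hσ : Antitone (w ∘ σ)) (hx : ∀ i, |x i| ≤ w i)
    (hcard : #{i | |x i| < w i} ≤ m) :
    ∑ j ∈ univ.filter (fun j : Fin N => m ≤ (j : ℕ)), w (σ j) ^ 2 ≤ ∑ i, x i ^ 2 := by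
  set F := univ.filter fun i => |x i| < w i
  have hsat : ∀ i ∈ Fᶜ, w i ^ 2 = x i ^ 2 := fun i hi => by
    have : |x i| = w i := (hx i).antisymm (by simpa [F] using hi)
    rw [← this, sq_abs]
  have hcard' : #(Fᶜ.map σ.symm.toEmbedding)ᶜ ≤ m := by
    have := card_le_univ F
    simp only [card_compl, card_map, Fintype.card_fin] at this ⊢
    omega
  calc ∑ j ∈ univ.filter (fun j : Fin N => m ≤ (j : ℕ)), w (σ j) ^ 2
      ≤ ∑ j ∈ Fᶜ.map σ.symm.toEmbedding, w (σ j) ^ 2 :=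
        Antitone.sum_tail_le_sum_of_card_compl_le
          (fun i j hij => pow_le_pow_left₀ (hw _) (hσ hij) 2) (fun j => sq_nonneg _) hcard'
    _ = ∑ i ∈ Fᶜ, w i ^ 2 := by simp [sum_map]
    _ = ∑ i ∈ Fᶜ, x i ^ 2 := sum_congr rfl hsat
    _ ≤ ∑ i, x i ^ 2 := sum_le_univ_sum_of_nonneg fun i => sq_nonneg _

theorem norm_le_norm_sub_or_norm_le_norm_neg_sub {E : Type*} [SeminormedAddCommGroup E]
    [NormedSpace ℝ E] (x y : E) : ‖x‖ ≤ ‖x - y‖ ∨ ‖x‖ ≤ ‖-x - y‖ := by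
  by_contra! h
  have : ‖(2 : ℝ) • x‖ ≤ ‖x - y‖ + ‖-x - y‖ :=
    calc ‖(2 : ℝ) • x‖ = ‖(x - y) - (-x - y)‖ := by congr 1; module
      _ ≤ ‖x - y‖ + ‖-x - y‖ := norm_sub_le _ _
  rw [norm_smul, Real.norm_two] at this
  linarith [h.1, h.2]

theorem statement5_general {N m : ℕ} (w : Fin N → ℝ) (hw : ∀ i, 0 < w i)
    (σ : Equiv.Perm (Fin N)) (hσ : ∀ i j : Fin N, i ≤ j → w (σ j) ≤ w (σ i))
    (Γ : EuclideanSpace ℝ (Fin N) → (Fin m → ℝ)) (hΓ : IsAdaptive Γ)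
    (Δ : (Fin m → ℝ) → EuclideanSpace ℝ (Fin N)) :
    ∃ x : EuclideanSpace ℝ (Fin N), (∀ i, |x i| ≤ w i) ∧
      (∑ j ∈ Finset.univ.filter (fun j : Fin N => m ≤ (j : ℕ)), w (σ j) ^ 2) ^ (1/2 : ℝ) ≤
        ‖x - Δ (Γ x)‖ := by
  obtain ⟨φ, hφ⟩ := hΓ.exists_linearMap_ker_subset_preimage_zero
  obtain ⟨x, hx0, hxw, hcard⟩ := exists_mem_ker_abs_le_card_filter_abs_lt_le_finrank
    (fun i => (hw i).le) (φ ∘ₗ (WithLp.linearEquiv 2 ℝ (Fin N → ℝ)).symm.toLinearMap)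
  rw [finrank_fin_fun] at hcard
  set v : EuclideanSpace ℝ (Fin N) := WithLp.toLp 2 x
  have hv : (∑ j ∈ Finset.univ.filter (fun j : Fin N => m ≤ (j : ℕ)), w (σ j) ^ 2) ^ (1/2 : ℝ)
      ≤ ‖v‖ := by
    rw [EuclideanSpace.norm_eq, ← Real.sqrt_eq_rpow]
    refine Real.sqrt_le_sqrt ((sum_sq_tail_le_sum_sq (fun i => (hw i).le) σ hσ hxw
      hcard).trans_eq ?_)
    simp [v]
  have hΓv : Γ v = 0 := hφ (LinearMap.mem_ker.2 hx0)
  have hΓnv : Γ (-v) = 0 := hφ (Submodule.neg_mem _ (LinearMap.mem_ker.2 hx0))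
  rcases norm_le_norm_sub_or_norm_le_norm_neg_sub v (Δ 0) with h | h
  · exact ⟨v, hxw, by rw [hΓv]; exact hv.trans h⟩
  · exact ⟨-v, by simpa [v] using hxw, by rw [hΓnv]; exact hv.trans h⟩

/-- if `w` is a vector of positive weights with nonincreasing
rearrangement `w ∘ σ`, then for every adaptive sampling operator `Γ : ℓ²_N → ℝ^m`
and every reconstruction map `Δ : ℝ^m → ℓ²_N`, the worst-case `ℓ²` recovery error
over the weighted `ℓ^∞` ball `B^∞_N(w) = {x : |x i| ≤ w i ∀ i}` is at least
`(∑_{j=m+1}^N w_{(j)}²)^{1/2}`; indeed this value is attained: there is an `x` in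
the ball whose recovery error is at least that value. -/
theorem statement5 {N m : ℕ} (hm : m < N) (w : Fin N → ℝ) (hw : ∀ i, 0 < w i)
    (σ : Equiv.Perm (Fin N)) (hσ : ∀ i j : Fin N, i ≤ j → w (σ j) ≤ w (σ i))
    (Γ : EuclideanSpace ℝ (Fin N) → (Fin m → ℝ)) (hΓ : IsAdaptive Γ)
    (Δ : (Fin m → ℝ) → EuclideanSpace ℝ (Fin N)) :
    ∃ x : EuclideanSpace ℝ (Fin N), (∀ i, |x i| ≤ w i) ∧
      (∑ j ∈ Finset.univ.filter (fun j : Fin N => m ≤ (j : ℕ)), w (σ j) ^ 2) ^ (1/2 : ℝ) ≤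
        ‖x - Δ (Γ x)‖ :=
  statement5_general w hw σ hσ Γ hΓ Δ
end

section
/- Let V be a real Hilbert space and suppose the matrix A ∈ ℝ^{m×N} satisfies the robust null space property over V of order s ∈ {1,…,N} with constants 0 < ρ < 1 and γ > 0. Let x ∈ V^N and f = Ax ∈ V^m. Then every minimizer x̂ ∈ V^N of the basis pursuit problem min_{z ∈ V^N} ‖z‖_{1;V} subject to Az = f satisfies ‖x − x̂‖_{1;V} ≤ C₁ · σ_s(x)_{1;V} and ‖x − x̂‖_{2;V} ≤ C₂ · σ_s(x)_{1;V} / √s, where C₁ = 2(1+ρ)/(1−ρ) and C₂ = 2(1+ρ)²/(1−ρ). -/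
open Finset

noncomputable section
open scoped Classical

variable {V : Type*} [NormedAddCommGroup V] [InnerProductSpace ℝ V]

/-- The `ℓ¹(V)`-norm of a `V`-valued vector: `‖x‖_{1;V} = ∑ i, ‖x i‖_V`. -/
def norm1V {N : ℕ} (x : Fin N → V) : ℝ := ∑ i, ‖x i‖

/-- The `ℓ²(V)`-norm of a `V`-valued vector: `‖x‖_{2;V} = (∑ i, ‖x i‖_V²)^{1/2}`. -/
def norm2V {N : ℕ} (x : Fin N → V) : ℝ := Real.sqrt (∑ i, ‖x i‖ ^ 2)

/-- Action of a real `m × N` matrix on a vector in `V^N`: `(Ax)_i = ∑ j, A i j • x j`. -/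
def matMulV {m N : ℕ} (A : Matrix (Fin m) (Fin N) ℝ) (x : Fin N → V) : Fin m → V :=
  fun i => ∑ j, A i j • x j

/-- Restriction of `x ∈ V^N` to a set `S` of indices (zero outside `S`). -/
def restr {N : ℕ} (S : Finset (Fin N)) (x : Fin N → V) : Fin N → V :=
  fun i => if i ∈ S then x i else 0

/-- `A` satisfies the robust null space property (rNSP) over `V` of order `s` with
constants `ρ` and `γ`: `‖x_S‖_{2;V} ≤ ρ ‖x_{Sᶜ}‖_{1;V}/√s + γ ‖Ax‖_{2;V}` for all
`x ∈ V^N` and all `S ⊆ [N]` with `|S| ≤ s`. -/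
def RNSP {m N : ℕ} (A : Matrix (Fin m) (Fin N) ℝ) (V : Type*) [NormedAddCommGroup V]
    [InnerProductSpace ℝ V] (s : ℕ) (ρ γ : ℝ) : Prop :=
  ∀ (x : Fin N → V) (S : Finset (Fin N)), S.card ≤ s →
    norm2V (restr S x) ≤ ρ * norm1V (restr Sᶜ x) / Real.sqrt s + γ * norm2V (matMulV A x)

/-- The `ℓ¹`-norm best `s`-term approximation error of `x ∈ V^N`. -/
def sigmaSV {N : ℕ} (s : ℕ) (x : Fin N → V) : ℝ :=
  sInf { r | ∃ z : Fin N → V, (Finset.univ.filter fun i => z i ≠ 0).card ≤ s ∧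
    r = norm1V (x - z) }

lemma norm1V_restr {N : ℕ} (S : Finset (Fin N)) (w : Fin N → V) :
    norm1V (restr S w) = ∑ i ∈ S, ‖w i‖ := by
  simp [norm1V, restr, apply_ite (‖·‖), Finset.sum_ite_mem]

lemma norm2V_restr {N : ℕ} (S : Finset (Fin N)) (w : Fin N → V) :
    norm2V (restr S w) = Real.sqrt (∑ i ∈ S, ‖w i‖ ^ 2) := by
  simp [norm2V, restr, apply_ite (‖·‖ ^ 2), Finset.sum_ite_mem]

lemma sqrt_add_le' {a b : ℝ} (ha : 0 ≤ a) (hb : 0 ≤ b) :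
    Real.sqrt (a + b) ≤ Real.sqrt a + Real.sqrt b := by
  have h1 : a + b ≤ (Real.sqrt a + Real.sqrt b) ^ 2 := by
    nlinarith [Real.sq_sqrt ha, Real.sq_sqrt hb, Real.sqrt_nonneg a, Real.sqrt_nonneg b]
  calc Real.sqrt (a + b) ≤ Real.sqrt ((Real.sqrt a + Real.sqrt b) ^ 2) := Real.sqrt_le_sqrt h1
    _ = Real.sqrt a + Real.sqrt b := Real.sqrt_sq (by positivity)

lemma exists_top {N : ℕ} (f : Fin N → ℝ) (s : ℕ) (h : s ≤ N) :
    ∃ S : Finset (Fin N), S.card = s ∧ ∀ i ∈ S, ∀ j ∉ S, f j ≤ f i := by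
  induction s with
  | zero => exact ⟨∅, rfl, by simp⟩
  | succ n ih =>
    obtain ⟨S, hcard, hS⟩ := ih (Nat.le_of_succ_le h)
    have hne : Sᶜ.Nonempty := by
      rw [← Finset.card_pos, Finset.card_compl, hcard]
      simp only [Fintype.card_fin]
      omega
    obtain ⟨j₀, hj₀, hmax⟩ := Finset.exists_max_image Sᶜ f hne
    refine ⟨insert j₀ S, ?_, ?_⟩
    · rw [Finset.card_insert_of_notMem (by simpa using hj₀), hcard]
    · intro i hi j hj
      rcases Finset.mem_insert.mp hi with rfl | hi
      · exact hmax j (by simpa using fun hjS => hj (Finset.mem_insert_of_mem hjS))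
      · exact hS i hi j fun hjS => hj (Finset.mem_insert_of_mem hjS)

lemma sum_le_sqrt_card {N : ℕ} (S : Finset (Fin N)) (w : Fin N → V) :
    ∑ i ∈ S, ‖w i‖ ≤ Real.sqrt S.card * Real.sqrt (∑ i ∈ S, ‖w i‖ ^ 2) := by
  rw [← Real.sqrt_mul (by positivity)]
  refine Real.le_sqrt_of_sq_le ?_
  exact_mod_cast sq_sum_le_card_mul_sum_sq (s := S) (f := fun i => ‖w i‖)

/-- Theorem 5.7: if `A ∈ ℝ^{m×N}` has the rNSP over a Hilbert space
`V` of order `s` with constants `0 < ρ < 1` and `γ > 0`, `x ∈ V^N` and `f = Ax`, then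
every minimizer `x̂` of the basis pursuit problem `min ‖z‖_{1;V} s.t. Az = f` satisfies
`‖x - x̂‖_{1;V} ≤ C₁ σ_s(x)_{1;V}` and `‖x - x̂‖_{2;V} ≤ C₂ σ_s(x)_{1;V}/√s`,
with `C₁ = 2(1+ρ)/(1-ρ)` and `C₂ = 2(1+ρ)²/(1-ρ)`. -/
theorem statement9 [CompleteSpace V] {m N : ℕ} (A : Matrix (Fin m) (Fin N) ℝ)
    (s : ℕ) (hs1 : 1 ≤ s) (hsN : s ≤ N) (ρ γ : ℝ) (hρ0 : 0 < ρ) (hρ1 : ρ < 1)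
    (hγ : 0 < γ) (hA : RNSP A V s ρ γ)
    (x : Fin N → V) (xhat : Fin N → V)
    (hfeas : matMulV A xhat = matMulV A x)
    (hmin : ∀ z : Fin N → V, matMulV A z = matMulV A x → norm1V xhat ≤ norm1V z) :
    norm1V (x - xhat) ≤ (2 * (1 + ρ) / (1 - ρ)) * sigmaSV s x ∧
    norm2V (x - xhat) ≤ (2 * (1 + ρ) ^ 2 / (1 - ρ)) * sigmaSV s x / Real.sqrt s := by
  set v : Fin N → V := x - xhat with hv
  have hρ1' : (0:ℝ) < 1 - ρ := by linarith
  have hsqs : (0:ℝ) < Real.sqrt s := Real.sqrt_pos.mpr (by exact_mod_cast hs1)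
  -- A v = 0
  have hAv : matMulV A v = 0 := by
    funext i
    have h := congrFun hfeas i
    simp only [matMulV] at h ⊢
    simp only [hv, Pi.sub_apply, smul_sub, Finset.sum_sub_distrib, h, sub_self, Pi.zero_apply]
  have hnAv : norm2V (matMulV A v) = 0 := by
    rw [hAv]; simp [norm2V]
  -- rNSP consequences
  have hrnsp : ∀ U : Finset (Fin N), U.card ≤ s →
      norm2V (restr U v) ≤ ρ * (∑ i ∈ Uᶜ, ‖v i‖) / Real.sqrt s := by
    intro U hU
    have h := hA v U hU
    rw [hnAv, mul_zero, add_zero, norm1V_restr] at h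
    exact h
  have hl1 : ∀ U : Finset (Fin N), U.card ≤ s →
      ∑ i ∈ U, ‖v i‖ ≤ ρ * ∑ i ∈ Uᶜ, ‖v i‖ := by
    intro U hU
    have h1 := sum_le_sqrt_card U v
    rw [← norm2V_restr] at h1
    have h2 : Real.sqrt U.card ≤ Real.sqrt s := Real.sqrt_le_sqrt (by exact_mod_cast hU)
    have h3 : (0:ℝ) ≤ norm2V (restr U v) := Real.sqrt_nonneg _
    calc ∑ i ∈ U, ‖v i‖ ≤ Real.sqrt U.card * norm2V (restr U v) := h1
      _ ≤ Real.sqrt s * norm2V (restr U v) := mul_le_mul_of_nonneg_right h2 h3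
      _ ≤ Real.sqrt s * (ρ * (∑ i ∈ Uᶜ, ‖v i‖) / Real.sqrt s) :=
          mul_le_mul_of_nonneg_left (hrnsp U hU) hsqs.le
      _ = ρ * ∑ i ∈ Uᶜ, ‖v i‖ := by field_simp
  -- ℓ¹ bound for each T with |T| ≤ s
  have key1 : ∀ T : Finset (Fin N), T.card ≤ s →
      norm1V v ≤ (2 * (1 + ρ) / (1 - ρ)) * ∑ i ∈ Tᶜ, ‖x i‖ := by
    intro T hT
    set a := ∑ i ∈ T, ‖v i‖ with hadef
    set b := ∑ i ∈ Tᶜ, ‖v i‖ with hbdef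
    set σ := ∑ i ∈ Tᶜ, ‖x i‖ with hσdef
    have ha : a ≤ ρ * b := hl1 T hT
    have hb0 : 0 ≤ b := Finset.sum_nonneg fun i _ => norm_nonneg _
    have hσ0 : 0 ≤ σ := Finset.sum_nonneg fun i _ => norm_nonneg _
    have hmin' : norm1V xhat ≤ norm1V x := hmin x rfl
    have e1 : ∑ i ∈ T, ‖x i‖ - a ≤ ∑ i ∈ T, ‖xhat i‖ := by
      rw [hadef, ← Finset.sum_sub_distrib]
      refine Finset.sum_le_sum fun i _ => ?_
      have hx : ‖x i‖ ≤ ‖xhat i‖ + ‖v i‖ := by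
        have : x i = xhat i + v i := by simp [hv]
        rw [this]; exact norm_add_le _ _
      linarith
    have e2 : b - σ ≤ ∑ i ∈ Tᶜ, ‖xhat i‖ := by
      rw [hbdef, hσdef, ← Finset.sum_sub_distrib]
      refine Finset.sum_le_sum fun i _ => ?_
      have hx : ‖v i‖ ≤ ‖x i‖ + ‖xhat i‖ := by
        have : v i = x i - xhat i := by simp [hv]
        rw [this]; exact norm_sub_le _ _
      linarith
    have hsplitx : norm1V x = ∑ i ∈ T, ‖x i‖ + σ := by
      rw [hσdef, norm1V, Finset.sum_add_sum_compl]
    have hsplith : norm1V xhat = ∑ i ∈ T, ‖xhat i‖ + ∑ i ∈ Tᶜ, ‖xhat i‖ := by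
      rw [norm1V, Finset.sum_add_sum_compl]
    have hbab : b ≤ a + 2 * σ := by linarith
    have hb2 : b ≤ 2 * σ / (1 - ρ) := by
      rw [le_div_iff₀ hρ1']
      nlinarith
    have hsplitv : norm1V v = a + b := by
      rw [hadef, hbdef, norm1V, Finset.sum_add_sum_compl]
    calc norm1V v = a + b := hsplitv
      _ ≤ (1 + ρ) * b := by linarith
      _ ≤ (1 + ρ) * (2 * σ / (1 - ρ)) := by
          apply mul_le_mul_of_nonneg_left hb2 (by linarith)
      _ = (2 * (1 + ρ) / (1 - ρ)) * σ := by field_simp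
  -- ℓ² vs ℓ¹ bound
  have hn1v0 : 0 ≤ norm1V v := Finset.sum_nonneg fun i _ => norm_nonneg _
  have key2 : norm2V v ≤ (1 + ρ) * norm1V v / Real.sqrt s := by
    obtain ⟨S, hcard, htop⟩ := exists_top (fun i => ‖v i‖) s hsN
    set A1 := ∑ i ∈ S, ‖v i‖ with hA1
    set B1 := ∑ i ∈ Sᶜ, ‖v i‖ with hB1
    have hA10 : 0 ≤ A1 := Finset.sum_nonneg fun i _ => norm_nonneg _
    have hB10 : 0 ≤ B1 := Finset.sum_nonneg fun i _ => norm_nonneg _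
    have hsplitv : norm1V v = A1 + B1 := by
      rw [hA1, hB1, norm1V, Finset.sum_add_sum_compl]
    have hS2 : norm2V (restr S v) ≤ ρ * norm1V v / Real.sqrt s := by
      refine (hrnsp S hcard.le).trans ?_
      gcongr
      rw [hsplitv]; linarith
    have hmax : ∀ j ∉ S, (s:ℝ) * ‖v j‖ ≤ A1 := by
      intro j hj
      have h1 : (s:ℝ) * ‖v j‖ = ∑ _i ∈ S, ‖v j‖ := by
        rw [Finset.sum_const, hcard, nsmul_eq_mul]
      rw [h1]
      exact Finset.sum_le_sum fun i hi => htop i hi j hj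
    have hSc2 : ∑ i ∈ Sᶜ, ‖v i‖ ^ 2 ≤ (norm1V v) ^ 2 / s := by
      have hs0 : (0:ℝ) < s := by exact_mod_cast hs1
      have h1 : ∑ i ∈ Sᶜ, ‖v i‖ ^ 2 ≤ ∑ i ∈ Sᶜ, (A1 / s) * ‖v i‖ := by
        refine Finset.sum_le_sum fun i hi => ?_
        have hi' : i ∉ S := by simpa using hi
        have := hmax i hi'
        have h2 : ‖v i‖ ≤ A1 / s := by rw [le_div_iff₀ hs0]; linarith
        calc ‖v i‖ ^ 2 = ‖v i‖ * ‖v i‖ := sq ‖v i‖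
          _ ≤ (A1 / s) * ‖v i‖ := mul_le_mul_of_nonneg_right h2 (norm_nonneg _)
      rw [← Finset.mul_sum, ← hB1] at h1
      refine h1.trans ?_
      rw [hsplitv, div_mul_eq_mul_div, div_le_div_iff₀ hs0 hs0]
      nlinarith [sq_nonneg (A1 - B1), hs0, mul_nonneg hA10 hB10]
    have hsplit2 : norm2V v ≤ norm2V (restr S v) + Real.sqrt (∑ i ∈ Sᶜ, ‖v i‖ ^ 2) := by
      rw [norm2V_restr, norm2V, ← Finset.sum_add_sum_compl S (fun i => ‖v i‖ ^ 2)]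
      exact sqrt_add_le' (Finset.sum_nonneg fun i _ => by positivity)
        (Finset.sum_nonneg fun i _ => by positivity)
    have hSc3 : Real.sqrt (∑ i ∈ Sᶜ, ‖v i‖ ^ 2) ≤ norm1V v / Real.sqrt s := by
      refine (Real.sqrt_le_sqrt hSc2).trans ?_
      rw [Real.sqrt_div (by positivity), Real.sqrt_sq hn1v0]
    calc norm2V v ≤ norm2V (restr S v) + Real.sqrt (∑ i ∈ Sᶜ, ‖v i‖ ^ 2) := hsplit2
      _ ≤ ρ * norm1V v / Real.sqrt s + norm1V v / Real.sqrt s := add_le_add hS2 hSc3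
      _ = (1 + ρ) * norm1V v / Real.sqrt s := by ring
  -- pass to sigmaSV via sInf
  have hC1 : (0:ℝ) < 2 * (1 + ρ) / (1 - ρ) := by positivity
  have hσbound : ∀ r ∈ { r | ∃ z : Fin N → V,
      (Finset.univ.filter fun i => z i ≠ 0).card ≤ s ∧ r = norm1V (x - z) },
      norm1V v ≤ (2 * (1 + ρ) / (1 - ρ)) * r := by
    rintro r ⟨z, hzcard, rfl⟩
    set T := Finset.univ.filter fun i => z i ≠ 0 with hTdef
    have hσr : ∑ i ∈ Tᶜ, ‖x i‖ ≤ norm1V (x - z) := by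
      rw [norm1V, ← Finset.sum_add_sum_compl T (fun i => ‖(x - z) i‖)]
      have he : ∑ i ∈ Tᶜ, ‖x i‖ = ∑ i ∈ Tᶜ, ‖(x - z) i‖ := by
        refine Finset.sum_congr rfl fun i hi => ?_
        have hz : z i = 0 := by
          by_contra hne
          exact (Finset.mem_compl.mp hi) (by simp [hTdef, hne])
        simp [hz]
      rw [he]
      have : 0 ≤ ∑ i ∈ T, ‖(x - z) i‖ := Finset.sum_nonneg fun i _ => norm_nonneg _
      linarith
    exact (key1 T hzcard).trans (mul_le_mul_of_nonneg_left hσr hC1.le)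
  have hne : { r | ∃ z : Fin N → V,
      (Finset.univ.filter fun i => z i ≠ 0).card ≤ s ∧ r = norm1V (x - z) }.Nonempty := by
    exact ⟨norm1V (x - 0), 0, by simp, rfl⟩
  have h1 : norm1V v ≤ (2 * (1 + ρ) / (1 - ρ)) * sigmaSV s x := by
    have hlb : norm1V v / (2 * (1 + ρ) / (1 - ρ)) ≤ sigmaSV s x := by
      refine le_csInf hne fun b hb => ?_
      rw [div_le_iff₀ hC1]
      rw [mul_comm]
      exact hσbound b hb
    rw [div_le_iff₀ hC1] at hlb
    linarith [hlb]
  refine ⟨h1, ?_⟩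
  calc norm2V v ≤ (1 + ρ) * norm1V v / Real.sqrt s := key2
    _ ≤ (1 + ρ) * ((2 * (1 + ρ) / (1 - ρ)) * sigmaSV s x) / Real.sqrt s := by
        gcongr
    _ = (2 * (1 + ρ) ^ 2 / (1 - ρ)) * sigmaSV s x / Real.sqrt s := by
        field_simp

end
end

section
/- Let 0 < p < 1 and let g : ℕ → (0,∞) be a nondecreasing function with ∑_{n=1}^∞ 1/(n·g(n)) < ∞. Set c_{p,g} = ( ∑_{n=1}^∞ (n·g(n))^{−1} )^{−1/p} and define the sequence b = (b_i)_{i∈ℕ} by b_i = c_{p,g} · (i·g(i))^{−1/p}. Then: (i) b is monotonically nonincreasing; (ii) ∑_{i=1}^∞ b_i^p = 1 (so ‖b‖_p = 1, and since b is nonincreasing it equals its minimal monotone majorant, hence ‖b‖_{p,M} = 1); and (iii) for every m ∈ ℕ with m ≥ 1, the ℓ²-norm best m-term approximation error satisfies σ_m(b)₂² = ∑_{i=m+1}^∞ b_i² ≥ c_{p,g}² · 2^{−2/p} · g(2m)^{−2/p} · m^{1 − 2/p}. -/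
noncomputable section

/-- The `ℓ²`-norm best `s`-term approximation error of a sequence `z`:
`σ_s(z)₂ = inf { ‖z - w‖₂ : w has at most s nonzero entries }`. -/
def sigma2 (s : ℕ) (z : ℕ → ℝ) : ℝ :=
  sInf { r | ∃ w : ℕ → ℝ, {i | w i ≠ 0}.Finite ∧ {i | w i ≠ 0}.ncard ≤ s ∧
    r = Real.sqrt (∑' i, (z i - w i) ^ 2) }

/-- Theorem 2.1(c), construction: let `0 < p < 1`, `g : ℕ → (0,∞)`
nondecreasing with `∑ 1/(n g(n)) < ∞`, `c_{p,g} = (∑ (n g(n))⁻¹)^{-1/p}` and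
`b i = c_{p,g} (i g(i))^{-1/p}`. Then `b` is nonincreasing, `∑ b i ^ p = 1`
(so `‖b‖_p = ‖b‖_{p,M} = 1`), and for every `m ≥ 1` the `ℓ²`-norm best `m`-term
approximation error satisfies
`σ_m(b)₂² = ∑_{i>m} b i² ≥ c_{p,g}² 2^{-2/p} g(2m)^{-2/p} m^{1-2/p}`. -/
theorem statement12 (p : ℝ) (hp0 : 0 < p) (hp1 : p < 1) (g : ℕ → ℝ)
    (hgpos : ∀ n : ℕ, 1 ≤ n → 0 < g n)
    (hgmono : ∀ n k : ℕ, 1 ≤ n → n ≤ k → g n ≤ g k)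
    (hgsum : Summable fun n : ℕ => ((n : ℝ) * g n)⁻¹)
    (cpg : ℝ) (hc : cpg = (∑' n : ℕ, ((n : ℝ) * g n)⁻¹) ^ (-(1 / p)))
    (b : ℕ → ℝ) (hb : ∀ i : ℕ, b i = cpg * ((i : ℝ) * g i) ^ (-(1 / p))) :
    (∀ i j : ℕ, 1 ≤ i → i ≤ j → b j ≤ b i) ∧
    (∑' i : ℕ, b i ^ p = 1) ∧
    (∀ m : ℕ, 1 ≤ m →
      sigma2 m b ^ 2 = ∑' i : ℕ, b (i + m + 1) ^ 2 ∧
      cpg ^ 2 * (2 : ℝ) ^ (-(2 / p)) * g (2 * m) ^ (-(2 / p)) *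
          (m : ℝ) ^ ((1 : ℝ) - 2 / p) ≤ ∑' i : ℕ, b (i + m + 1) ^ 2) := by
  classical
  have hp : p ≠ 0 := ne_of_gt hp0
  set S := ∑' n : ℕ, ((n : ℝ) * g n)⁻¹ with hSdef
  have hterm_nonneg : ∀ n : ℕ, 0 ≤ ((n : ℝ) * g n)⁻¹ := by
    intro n
    rcases Nat.eq_zero_or_pos n with h | h
    · simp [h]
    · exact inv_nonneg.2 (mul_nonneg (Nat.cast_nonneg n) (hgpos n h).le)
  have hSpos : 0 < S := Summable.tsum_pos hgsum hterm_nonneg 1 (by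
    simp only [Nat.cast_one, one_mul]
    exact inv_pos.2 (hgpos 1 le_rfl))
  have hcpos : 0 < cpg := by rw [hc]; exact Real.rpow_pos_of_pos hSpos _
  have hX : ∀ i : ℕ, 1 ≤ i → 0 < (i : ℝ) * g i := fun i hi =>
    mul_pos (by exact_mod_cast hi) (hgpos i hi)
  have hXnn : ∀ i : ℕ, 0 ≤ (i : ℝ) * g i := by
    intro i
    rcases Nat.eq_zero_or_pos i with h | h
    · simp [h]
    · exact (hX i h).le
  have hbnn : ∀ i : ℕ, 0 ≤ b i := fun i => by
    rw [hb]; exact mul_nonneg hcpos.le (Real.rpow_nonneg (hXnn i) _)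
  have hmono : ∀ i j : ℕ, 1 ≤ i → i ≤ j → b j ≤ b i := by
    intro i j hi hij
    rw [hb, hb]
    refine mul_le_mul_of_nonneg_left ?_ hcpos.le
    refine Real.rpow_le_rpow_of_nonpos (hX i hi) ?_ (neg_nonpos.2 (by positivity))
    exact mul_le_mul (Nat.cast_le.2 hij) (hgmono i j hi hij) (hgpos i hi).le
      (Nat.cast_nonneg j)
  have hb0 : b 0 = 0 := by
    rw [hb, show ((0 : ℕ) : ℝ) * g 0 = 0 by simp,
      Real.zero_rpow (neg_ne_zero.2 (one_div_ne_zero hp)), mul_zero]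
  have hkey : ∀ i : ℕ, b i ^ p = cpg ^ p * ((i : ℝ) * g i)⁻¹ := by
    intro i
    rcases Nat.eq_zero_or_pos i with h | h
    · subst h
      rw [hb0, Real.zero_rpow hp]
      simp
    · rw [hb, Real.mul_rpow hcpos.le (Real.rpow_nonneg (hX i h).le _),
        ← Real.rpow_mul (hX i h).le]
      congr 1
      rw [show -(1 / p) * p = (-1 : ℝ) by field_simp, Real.rpow_neg_one]
  have hsum_p : ∑' i : ℕ, b i ^ p = 1 := by
    calc ∑' i : ℕ, b i ^ p = ∑' i : ℕ, cpg ^ p * ((i : ℝ) * g i)⁻¹ := by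
          exact tsum_congr hkey
      _ = cpg ^ p * S := tsum_mul_left
      _ = 1 := by
          rw [hc, ← Real.rpow_mul hSpos.le,
            show -(1 / p) * p = (-1 : ℝ) by field_simp, Real.rpow_neg_one]
          exact inv_mul_cancel₀ hSpos.ne'
  -- summability of squares
  have htwop : (1 : ℝ) ≤ 2 / p := by
    rw [le_div_iff₀ hp0]; linarith
  have hb2sum : Summable (fun i : ℕ => b i ^ 2) := by
    set C := cpg ^ 2 * g 1 ^ ((1 : ℝ) - 2 / p) with hC
    refine Summable.of_nonneg_of_le (fun i => sq_nonneg _) ?_ (hgsum.mul_left C)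
    intro i
    rcases Nat.eq_zero_or_pos i with h | h
    · subst h
      simp [hb0]
    · have hXp := hX i h
      have heq : b i ^ 2 = cpg ^ 2 * (((i : ℝ) * g i) ^ (-(2 / p))) := by
        rw [hb, mul_pow, ← Real.rpow_natCast ((((i : ℕ) : ℝ) * g i) ^ (-(1 / p))) 2,
          ← Real.rpow_mul hXp.le,
          show -(1 / p) * ((2 : ℕ) : ℝ) = -(2 / p) by push_cast; ring]
      rw [heq, show -(2 / p) = (-1 : ℝ) + ((1 : ℝ) - 2 / p) by ring,
        Real.rpow_add hXp, Real.rpow_neg_one]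
      have hg1X : g 1 ≤ (i : ℝ) * g i := by
        calc g 1 = 1 * g 1 := (one_mul _).symm
          _ ≤ (i : ℝ) * g i := mul_le_mul (by exact_mod_cast h) (hgmono 1 i le_rfl h)
              (hgpos 1 le_rfl).le (Nat.cast_nonneg i)
      have hmonot : ((i : ℝ) * g i) ^ ((1 : ℝ) - 2 / p) ≤ g 1 ^ ((1 : ℝ) - 2 / p) :=
        Real.rpow_le_rpow_of_nonpos (hgpos 1 le_rfl) hg1X (by linarith)
      calc cpg ^ 2 * (((i : ℝ) * g i)⁻¹ * ((i : ℝ) * g i) ^ ((1 : ℝ) - 2 / p))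
          ≤ cpg ^ 2 * (((i : ℝ) * g i)⁻¹ * g 1 ^ ((1 : ℝ) - 2 / p)) := by
            refine mul_le_mul_of_nonneg_left ?_ (by positivity)
            exact mul_le_mul_of_nonneg_left hmonot (inv_nonneg.2 hXp.le)
        _ = C * ((i : ℝ) * g i)⁻¹ := by rw [hC]; ring
  have htail : ∀ m : ℕ, Summable (fun i : ℕ => b (i + m + 1) ^ 2) := by
    intro m
    have h := (summable_nat_add_iff (f := fun i : ℕ => b i ^ 2) (m + 1)).2 hb2sum
    exact h.congr (fun i => by rw [← add_assoc])
  have htail_eq : ∀ m : ℕ,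
      (∑' i : ℕ, b (i + m + 1) ^ 2) =
        (∑' i : ℕ, b i ^ 2) - ∑ i ∈ Finset.range (m + 1), b i ^ 2 := by
    intro m
    have h1 := Summable.sum_add_tsum_nat_add (f := fun i : ℕ => b i ^ 2) (m + 1) hb2sum
    have h2 : (∑' i : ℕ, b (i + m + 1) ^ 2) = ∑' i : ℕ, b (i + (m + 1)) ^ 2 :=
      tsum_congr (fun i => by rw [← add_assoc])
    rw [h2]
    linarith
  refine ⟨hmono, hsum_p, ?_⟩
  intro m hm
  set T := ∑' i : ℕ, b (i + m + 1) ^ 2 with hTdef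
  have hTnn : (0 : ℝ) ≤ T := tsum_nonneg (fun i => sq_nonneg _)
  -- lower bound for any admissible w
  have hlb : ∀ w : ℕ → ℝ, {i | w i ≠ 0}.Finite → {i | w i ≠ 0}.ncard ≤ m →
      T ≤ ∑' i : ℕ, (b i - w i) ^ 2 := by
    intro w hfin hcard
    set F := hfin.toFinset with hF
    have hFcard : F.card ≤ m := by
      rwa [Set.ncard_eq_toFinset_card _ hfin] at hcard
    have hwF : ∀ i ∉ F, w i = 0 := by
      intro i hi
      by_contra hne
      exact hi (hfin.mem_toFinset.2 hne)
    have hsw : Summable (fun i : ℕ => (b i - w i) ^ 2) := by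
      have hrw : (fun i : ℕ => (b i - w i) ^ 2) =
          fun i => b i ^ 2 + ((b i - w i) ^ 2 - b i ^ 2) := by funext i; ring
      rw [hrw]
      refine hb2sum.add (summable_of_ne_finset_zero (s := F) ?_)
      intro i hi
      rw [hwF i hi]; ring
    have hsh2 : Summable (fun i : ℕ => if i ∈ F then (0 : ℝ) else b i ^ 2) := by
      refine Summable.of_nonneg_of_le (fun i => ?_) (fun i => ?_) hb2sum
      · by_cases h : i ∈ F <;> simp [h, sq_nonneg]
      · by_cases h : i ∈ F <;> simp [h, sq_nonneg]
    have step1 : (∑' i : ℕ, if i ∈ F then (0 : ℝ) else b i ^ 2) ≤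
        ∑' i : ℕ, (b i - w i) ^ 2 := by
      refine Summable.tsum_le_tsum (fun i => ?_) hsh2 hsw
      by_cases h : i ∈ F
      · simp [h, sq_nonneg]
      · simp [h, hwF i h]
    have step2 : (∑' i : ℕ, if i ∈ F then (0 : ℝ) else b i ^ 2) =
        (∑' i : ℕ, b i ^ 2) - ∑ i ∈ F, b i ^ 2 := by
      have hrw : (fun i : ℕ => if i ∈ F then (0 : ℝ) else b i ^ 2) =
          fun i => b i ^ 2 - (if i ∈ F then b i ^ 2 else 0) := by
        funext i; by_cases h : i ∈ F <;> simp [h]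
      rw [hrw, Summable.tsum_sub hb2sum (summable_of_ne_finset_zero (s := F)
        (fun i hi => if_neg hi)),
        tsum_eq_sum (s := F) (fun i hi => if_neg hi)]
      congr 1
      exact Finset.sum_congr rfl (fun i hi => if_pos hi)
    have hsub : Finset.Icc 1 m ⊆ Finset.range (m + 1) := by
      intro x hx
      simp only [Finset.mem_Icc] at hx
      simp only [Finset.mem_range]
      omega
    have step3 : ∑ i ∈ F, b i ^ 2 ≤ ∑ i ∈ Finset.range (m + 1), b i ^ 2 := by
      have h1 : ∑ i ∈ F ∩ Finset.range (m + 1), b i ^ 2 +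
          ∑ i ∈ F \ Finset.range (m + 1), b i ^ 2 = ∑ i ∈ F, b i ^ 2 :=
        Finset.sum_inter_add_sum_sdiff F (Finset.range (m + 1)) _
      have h2 : ∑ i ∈ Finset.range (m + 1) ∩ F, b i ^ 2 +
          ∑ i ∈ Finset.range (m + 1) \ F, b i ^ 2 =
          ∑ i ∈ Finset.range (m + 1), b i ^ 2 :=
        Finset.sum_inter_add_sum_sdiff _ F _
      have hinter : ∑ i ∈ Finset.range (m + 1) ∩ F, b i ^ 2 =
          ∑ i ∈ F ∩ Finset.range (m + 1), b i ^ 2 := by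
        rw [Finset.inter_comm]
      -- card comparison
      have hcards : (F \ Finset.range (m + 1)).card ≤ (Finset.Icc 1 m \ F).card := by
        have e1 : (F \ Finset.range (m + 1)).card + (F ∩ Finset.range (m + 1)).card
            = F.card := Finset.card_sdiff_add_card_inter _ _
        have e2 : (Finset.Icc 1 m \ F).card + (Finset.Icc 1 m ∩ F).card
            = (Finset.Icc 1 m).card := Finset.card_sdiff_add_card_inter _ _
        have e3 : (Finset.Icc 1 m).card = m := by simp
        have e4 : (F ∩ Finset.Icc 1 m).card ≤ (F ∩ Finset.range (m + 1)).card :=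
          Finset.card_le_card (Finset.inter_subset_inter (Finset.Subset.refl F) hsub)
        have e5 : (Finset.Icc 1 m ∩ F).card = (F ∩ Finset.Icc 1 m).card := by
          rw [Finset.inter_comm]
        omega
      have hAB : ∑ i ∈ F \ Finset.range (m + 1), b i ^ 2 ≤
          ∑ i ∈ Finset.range (m + 1) \ F, b i ^ 2 := by
        calc ∑ i ∈ F \ Finset.range (m + 1), b i ^ 2
            ≤ (F \ Finset.range (m + 1)).card • b (m + 1) ^ 2 := by
              refine Finset.sum_le_card_nsmul _ _ _ (fun x hx => ?_)
              simp only [Finset.mem_sdiff, Finset.mem_range] at hx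
              exact pow_le_pow_left₀ (hbnn x) (hmono (m + 1) x (by omega) (by omega)) 2
          _ ≤ (Finset.Icc 1 m \ F).card • b (m + 1) ^ 2 := by
              rw [nsmul_eq_mul, nsmul_eq_mul]
              exact mul_le_mul_of_nonneg_right (Nat.cast_le.2 hcards) (sq_nonneg _)
          _ ≤ ∑ i ∈ Finset.Icc 1 m \ F, b i ^ 2 := by
              refine Finset.card_nsmul_le_sum _ _ _ (fun x hx => ?_)
              simp only [Finset.mem_sdiff, Finset.mem_Icc] at hx
              exact pow_le_pow_left₀ (hbnn _) (hmono x (m + 1) (by omega) (by omega)) 2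
          _ ≤ ∑ i ∈ Finset.range (m + 1) \ F, b i ^ 2 := by
              refine Finset.sum_le_sum_of_subset_of_nonneg
                (Finset.sdiff_subset_sdiff hsub le_rfl) (fun i _ _ => sq_nonneg _)
      linarith
    have := htail_eq m
    rw [← hTdef] at this
    linarith
  -- the witness w0
  set w0 : ℕ → ℝ := fun i => if i ∈ Finset.Icc 1 m then b i else 0 with hw0
  have hsupp : {i | w0 i ≠ 0} ⊆ ↑(Finset.Icc 1 m) := by
    intro i hi
    simp only [Set.mem_setOf_eq, hw0] at hi
    by_contra h
    simp only [Finset.coe_Icc, Set.mem_Icc] at h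
    have : i ∉ Finset.Icc 1 m := by simp [Finset.mem_Icc]; omega
    exact hi (if_neg this)
  have hfin0 : {i | w0 i ≠ 0}.Finite :=
    Set.Finite.subset (Finset.finite_toSet _) hsupp
  have hncard0 : {i | w0 i ≠ 0}.ncard ≤ m := by
    calc {i | w0 i ≠ 0}.ncard ≤ (↑(Finset.Icc 1 m) : Set ℕ).ncard :=
          Set.ncard_le_ncard hsupp (Finset.finite_toSet _)
      _ = (Finset.Icc 1 m).card := Set.ncard_coe_finset _
      _ = m := by simp
  have hf0 : ∀ i : ℕ, (b i - w0 i) ^ 2 = if i ∈ Finset.Icc 1 m then 0 else b i ^ 2 := by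
    intro i
    have hwi : w0 i = if i ∈ Finset.Icc 1 m then b i else 0 := rfl
    rw [hwi]
    by_cases h : i ∈ Finset.Icc 1 m
    · rw [if_pos h, if_pos h]; ring
    · rw [if_neg h, if_neg h]; ring
  have hsf0 : Summable (fun i : ℕ => (b i - w0 i) ^ 2) := by
    refine Summable.of_nonneg_of_le (fun i => sq_nonneg _) (fun i => ?_) hb2sum
    rw [hf0 i]
    by_cases h : i ∈ Finset.Icc 1 m <;> simp [h, sq_nonneg]
  have hf0eq : (∑' i : ℕ, (b i - w0 i) ^ 2) = T := by
    rw [← Summable.sum_add_tsum_nat_add (m + 1) hsf0]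
    have hz : ∑ i ∈ Finset.range (m + 1), (b i - w0 i) ^ 2 = 0 := by
      refine Finset.sum_eq_zero (fun i hi => ?_)
      rw [hf0 i]
      simp only [Finset.mem_range] at hi
      rcases Nat.eq_zero_or_pos i with h | h
      · subst h
        simp [hb0, Finset.mem_Icc]
      · rw [if_pos (by simp [Finset.mem_Icc]; omega)]
    rw [hz, zero_add, hTdef]
    refine tsum_congr (fun i => ?_)
    rw [hf0 (i + (m + 1))]
    rw [if_neg (by simp [Finset.mem_Icc]; omega), ← add_assoc]
  -- sInf evaluation
  have hmem : Real.sqrt T ∈ { r | ∃ w : ℕ → ℝ, {i | w i ≠ 0}.Finite ∧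
      {i | w i ≠ 0}.ncard ≤ m ∧ r = Real.sqrt (∑' i, (b i - w i) ^ 2) } :=
    ⟨w0, hfin0, hncard0, by rw [hf0eq]⟩
  have hlb' : ∀ r ∈ { r | ∃ w : ℕ → ℝ, {i | w i ≠ 0}.Finite ∧
      {i | w i ≠ 0}.ncard ≤ m ∧ r = Real.sqrt (∑' i, (b i - w i) ^ 2) },
      Real.sqrt T ≤ r := by
    rintro r ⟨w, hfinw, hcardw, rfl⟩
    exact Real.sqrt_le_sqrt (hlb w hfinw hcardw)
  have hsig : sigma2 m b = Real.sqrt T := by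
    rw [sigma2]
    exact le_antisymm (csInf_le ⟨Real.sqrt T, hlb'⟩ hmem) (le_csInf ⟨_, hmem⟩ hlb')
  have hsq : sigma2 m b ^ 2 = T := by rw [hsig, Real.sq_sqrt hTnn]
  refine ⟨hsq, ?_⟩
  -- final inequality
  have hmpos : (0 : ℝ) < (m : ℝ) := by exact_mod_cast hm
  have hfin2 : (m : ℝ) * b (2 * m) ^ 2 ≤ T := by
    calc (m : ℝ) * b (2 * m) ^ 2 = (Finset.range m).card • b (2 * m) ^ 2 := by
          simp [nsmul_eq_mul]
      _ ≤ ∑ i ∈ Finset.range m, b (i + m + 1) ^ 2 := by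
          refine Finset.card_nsmul_le_sum _ _ _ (fun i hi => ?_)
          simp only [Finset.mem_range] at hi
          exact pow_le_pow_left₀ (hbnn _) (hmono (i + m + 1) (2 * m) (by omega) (by omega)) 2
      _ ≤ T := Summable.sum_le_tsum _ (fun i _ => sq_nonneg _) (htail m)
  have hgp : 0 < g (2 * m) := hgpos _ (by omega)
  have hXp : (0 : ℝ) < ((2 * m : ℕ) : ℝ) * g (2 * m) := hX (2 * m) (by omega)
  have hid : cpg ^ 2 * (2 : ℝ) ^ (-(2 / p)) * g (2 * m) ^ (-(2 / p)) *
      (m : ℝ) ^ ((1 : ℝ) - 2 / p) = (m : ℝ) * b (2 * m) ^ 2 := by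
    rw [hb, mul_pow, ← Real.rpow_natCast ((((2 * m : ℕ) : ℝ) * g (2 * m)) ^ (-(1 / p))) 2,
      ← Real.rpow_mul hXp.le]
    have e1 : -(1 / p) * ((2 : ℕ) : ℝ) = -(2 / p) := by push_cast; ring
    rw [e1]
    have hcast : ((2 * m : ℕ) : ℝ) = 2 * (m : ℝ) := by push_cast; ring
    rw [hcast, Real.mul_rpow (by positivity) hgp.le,
      Real.mul_rpow (by norm_num) hmpos.le,
      show (1 : ℝ) - 2 / p = 1 + -(2 / p) by ring, Real.rpow_add hmpos, Real.rpow_one]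
    ring
  calc cpg ^ 2 * (2 : ℝ) ^ (-(2 / p)) * g (2 * m) ^ (-(2 / p)) *
      (m : ℝ) ^ ((1 : ℝ) - 2 / p) = (m : ℝ) * b (2 * m) ^ 2 := hid
    _ ≤ T := hfin2

end
end

section
/- Let V be a real Banach space, (U, ϱ) a probability space, {ψ_j}_{j=1}^N a finite orthonormal system in L²_ϱ(U), v ∈ V with ‖v‖_V = 1, and c = (c_j)_{j=1}^N ∈ ℝ^N. Define f ∈ L²_ϱ(U;V) by f(y) = (∑_{j=1}^N c_j ψ_j(y))·v. Then for every h ∈ L²_ϱ(U;V) there exists d = (d_j)_{j=1}^N ∈ ℝ^N such that ‖f − h‖_{L²_ϱ(U;V)} ≥ ( ∑_{j=1}^N |c_j − d_j|² )^{1/2} = ‖c − d‖₂; one may take d_j = ∫_U ψ_j(y)·φ(h(y)) dϱ(y), where φ ∈ V* is any norm-one continuous linear functional with φ(v) = 1 (which exists by the Hahn–Banach theorem). -/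
/-!
Testing `f - h` against the norm-one functional `φ` gives the scalar function
`g = φ ∘ (f - h)` with `|g| ≤ ‖f - h‖` pointwise. Since `φ v = 1`, `g = ∑ⱼ cⱼ ψⱼ - φ ∘ h`,
so its `j`-th Fourier coefficient against the orthonormal system is `cⱼ - dⱼ`, and Bessel's
inequality in `L²_ϱ(U)` bounds `∑ⱼ (cⱼ - dⱼ)²` by `∫ g² ≤ ∫ ‖f - h‖²`.
-/

open MeasureTheory Finset

section Orthonormal

variable {U : Type*} [MeasurableSpace U] {ϱ : Measure U}

lemma MeasureTheory.MemLp.inner_toLp_eq_integral_mul {f g : U → ℝ} (hf : MemLp f 2 ϱ)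
    (hg : MemLp g 2 ϱ) :
    inner ℝ (hf.toLp f) (hg.toLp g) = ∫ y, f y * g y ∂ϱ := by
  rw [L2.inner_def]
  refine integral_congr_ae ?_
  filter_upwards [hf.coeFn_toLp, hg.coeFn_toLp] with y hfy hgy
  rw [Real.inner_apply, hfy, hgy]

lemma MeasureTheory.MemLp.norm_toLp_sq_eq_integral_sq {g : U → ℝ} (hg : MemLp g 2 ϱ) :
    ‖hg.toLp g‖ ^ 2 = ∫ y, g y ^ 2 ∂ϱ := by
  rw [← real_inner_self_eq_norm_sq, hg.inner_toLp_eq_integral_mul hg]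
  simp only [sq]

variable {ι : Type*} [DecidableEq ι] {ψ : ι → U → ℝ}

lemma orthonormal_toLp_of_integral_mul (hψ : ∀ j, MemLp (ψ j) 2 ϱ)
    (horth : ∀ i j, ∫ y, ψ i y * ψ j y ∂ϱ = if i = j then 1 else 0) :
    Orthonormal ℝ fun j => (hψ j).toLp (ψ j) :=
  orthonormal_iff_ite.2 fun i j => by
    rw [MemLp.inner_toLp_eq_integral_mul, horth]

theorem sum_sq_integral_mul_le_integral_sq (s : Finset ι) (hψ : ∀ j, MemLp (ψ j) 2 ϱ)
    (horth : ∀ i j, ∫ y, ψ i y * ψ j y ∂ϱ = if i = j then 1 else 0)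
    {g : U → ℝ} (hg : MemLp g 2 ϱ) :
    ∑ j ∈ s, (∫ y, ψ j y * g y ∂ϱ) ^ 2 ≤ ∫ y, g y ^ 2 ∂ϱ := by
  have := (orthonormal_toLp_of_integral_mul hψ horth).sum_inner_products_le (hg.toLp g) (s := s)
  simpa only [MemLp.inner_toLp_eq_integral_mul, Real.norm_eq_abs, sq_abs,
    hg.norm_toLp_sq_eq_integral_sq] using this

theorem integral_mul_sum_orthonormal [Fintype ι] (hψ : ∀ j, MemLp (ψ j) 2 ϱ)
    (horth : ∀ i j, ∫ y, ψ i y * ψ j y ∂ϱ = if i = j then 1 else 0) (c : ι → ℝ) (i : ι) :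
    ∫ y, ψ i y * ∑ j, c j * ψ j y ∂ϱ = c i := by
  simp_rw [Finset.mul_sum, mul_left_comm (ψ i _)]
  have hint (j : ι) : Integrable (fun y => c j * (ψ i y * ψ j y)) ϱ :=
    ((hψ i).integrable_mul (hψ j)).const_mul (c j)
  rw [integral_finsetSum _ fun j _ => hint j]
  simp [integral_const_mul, horth]

end Orthonormal

theorem statement13_general {V : Type*} [NormedAddCommGroup V] [NormedSpace ℝ V]
    {U : Type*} [MeasurableSpace U] (ϱ : Measure U)
    {N : ℕ} (ψ : Fin N → U → ℝ) (hψ : ∀ j, MemLp (ψ j) 2 ϱ)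
    (horth : ∀ i j : Fin N, ∫ y, ψ i y * ψ j y ∂ϱ = if i = j then 1 else 0)
    (v : V) (c : Fin N → ℝ)
    (f : U → V) (hf : ∀ y, f y = (∑ j, c j * ψ j y) • v)
    (h : U → V) (hh : MemLp h 2 ϱ)
    (φ : V →L[ℝ] ℝ) (hφ : ‖φ‖ = 1) (hφv : φ v = 1) :
    ∃ d : Fin N → ℝ, (∀ j, d j = ∫ y, ψ j y * φ (h y) ∂ϱ) ∧
      Real.sqrt (∑ j, (c j - d j) ^ 2) ≤ Real.sqrt (∫ y, ‖f y - h y‖ ^ 2 ∂ϱ) := by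
  set s : U → ℝ := fun y => ∑ j, c j * ψ j y
  have hs : MemLp s 2 ϱ := memLp_finsetSum _ fun j _ => (hψ j).const_mul (c j)
  have hf_mem : MemLp f 2 ϱ := by
    rw [show f = (ContinuousLinearMap.toSpanSingleton ℝ v) ∘ s from funext hf]
    exact (ContinuousLinearMap.toSpanSingleton ℝ v).comp_memLp' hs
  set g : U → ℝ := fun y => φ (f y - h y)
  have hg : MemLp g 2 ϱ := φ.comp_memLp' (hf_mem.sub hh)
  have hφh : MemLp (fun y => φ (h y)) 2 ϱ := φ.comp_memLp' hh
  have hg_coeff (j : Fin N) : ∫ y, ψ j y * g y ∂ϱ = c j - ∫ y, ψ j y * φ (h y) ∂ϱ := by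
    have hg_eq (y : U) : ψ j y * g y = ψ j y * s y - ψ j y * φ (h y) := by
      simp only [g, hf, map_sub, map_smul, hφv, smul_eq_mul, mul_one, mul_sub, s]
    simp_rw [hg_eq]
    rw [integral_sub (f := fun y => ψ j y * s y) (g := fun y => ψ j y * φ (h y))
      ((hψ j).integrable_mul hs) ((hψ j).integrable_mul hφh),
      integral_mul_sum_orthonormal hψ horth]
  have hg_le (y : U) : g y ^ 2 ≤ ‖f y - h y‖ ^ 2 := by
    have := φ.le_opNorm (f y - h y)
    rw [hφ, one_mul, Real.norm_eq_abs] at this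
    exact sq_le_sq' (abs_le.1 this).1 (abs_le.1 this).2
  refine ⟨_, fun j => rfl, Real.sqrt_le_sqrt ?_⟩
  calc ∑ j, (c j - ∫ y, ψ j y * φ (h y) ∂ϱ) ^ 2 = ∑ j, (∫ y, ψ j y * g y ∂ϱ) ^ 2 := by
        simp only [hg_coeff]
    _ ≤ ∫ y, g y ^ 2 ∂ϱ := sum_sq_integral_mul_le_integral_sq _ hψ horth hg
    _ ≤ ∫ y, ‖f y - h y‖ ^ 2 ∂ϱ :=
        integral_mono hg.integrable_sq (hf_mem.sub hh).norm.integrable_sq hg_le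

/-- key step in Lemma 4.2: let `V` be a real Banach space,
`(U, ϱ)` a probability space, `{ψ_j}_{j=1}^N` a finite orthonormal system in
`L²_ϱ(U)`, `v ∈ V` with `‖v‖ = 1`, `c ∈ ℝ^N`, and `f(y) = (∑_j c_j ψ_j(y)) • v`.
Then for every `h ∈ L²_ϱ(U; V)` there exists `d ∈ ℝ^N` with
`‖c - d‖₂ ≤ ‖f - h‖_{L²_ϱ(U;V)}`; one may take `d_j = ∫ ψ_j(y) φ(h(y)) dϱ(y)`,
where `φ ∈ V*` is any norm-one continuous linear functional with `φ(v) = 1`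
(which exists by Hahn–Banach). -/
theorem statement13 {V : Type*} [NormedAddCommGroup V] [NormedSpace ℝ V]
    [CompleteSpace V]
    {U : Type*} [MeasurableSpace U] (ϱ : Measure U) [IsProbabilityMeasure ϱ]
    {N : ℕ} (ψ : Fin N → U → ℝ) (hψ : ∀ j, MemLp (ψ j) 2 ϱ)
    (horth : ∀ i j : Fin N, ∫ y, ψ i y * ψ j y ∂ϱ = if i = j then 1 else 0)
    (v : V) (hv : ‖v‖ = 1) (c : Fin N → ℝ)
    (f : U → V) (hf : ∀ y, f y = (∑ j, c j * ψ j y) • v)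
    (h : U → V) (hh : MemLp h 2 ϱ)
    (φ : V →L[ℝ] ℝ) (hφ : ‖φ‖ = 1) (hφv : φ v = 1) :
    ∃ d : Fin N → ℝ, (∀ j, d j = ∫ y, ψ j y * φ (h y) ∂ϱ) ∧
      Real.sqrt (∑ j, (c j - d j) ^ 2) ≤ Real.sqrt (∫ y, ‖f y - h y‖ ^ 2 ∂ϱ) :=
  statement13_general ϱ ψ hψ horth v c f hf h hh φ hφ hφv
end
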